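/- arXiv:1501.07378 — 2 statements merged into one kernel-verified Lean document; each statement's English description precedes it below -/
import Mathlib

section
/- For μ = (μ_1, μ_2), the E-block entries of the Gauss decomposition of the super Yangian satisfy (u-v)[E_{1;i,j}(u), E_{1;h,k}(v)] = (-1)^{|h|_1|j|_2 + |j|_2|k|_2 + |h|_1|k|_2} ( E_{1;i,k}(u) - E_{1;i,k}(v) )( E_{1;h,j}(u) - E_{1;h,j}(v) ), for all 1 ≤ i,h ≤ μ_1 and 1 ≤ j,k ≤ μ_2. -/
noncomputable section

namespace SuperYangian

/-- The sign `(-1)^x` for `x : ZMod 2`. -/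
def sgn (x : ZMod 2) : ℂ := if x = 0 then 1 else -1

variable {A : Type*}

/-- The supercommutator `[x, y] = x*y - ε • (y*x)` with prescribed sign `ε`
(for homogeneous `x`, `y` one takes `ε = (-1)^{|x||y|}`). -/
def scomm [Ring A] [Algebra ℂ A] (ε : ℂ) (x y : A) : A := x * y - ε • (y * x)

/-- `off μ a = μ 0 + ⋯ + μ (a-1)`. -/
def off (μ : ℕ → ℕ) (a : ℕ) : ℕ := ∑ b ∈ Finset.range a, μ b

/-- A family `t i j r` (the coefficient of `u^{-r}` in `t_{ij}(u)`, with 0-based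
indices `i j < d`) satisfying the defining RTT relations of the super Yangian
`Y(gl_{M|N})` with parity sequence `p`; the super Yangian itself, via
`t_{i+1,j+1}^{(r)} = t i j r`, is the universal such family. -/
structure RTT (A : Type*) [Ring A] [Algebra ℂ A] (d : ℕ) (p : ℕ → ZMod 2) where
  t : ℕ → ℕ → ℕ → A
  t_zero : ∀ i j, t i j 0 = if i = j then (1 : A) else 0
  rtt : ∀ i j h k r s : ℕ, i < d → j < d → h < d → k < d →
    scomm (sgn ((p i + p j) * (p h + p k))) (t i j r) (t h k s) =
      sgn (p i * p j + p i * p h + p j * p h) •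
        ∑ g ∈ Finset.range (min r s),
          (t h j g * t i k (r + s - 1 - g) - t h j (r + s - 1 - g) * t i k g)

/-- Gauss decomposition data `T(u) = F(u) D(u) E(u)` with respect to the composition
`μ = (μ 0, …, μ (n-1))`, in coefficient form.  `E a b i j r` is the coefficient of
`u^{-r}` in the `(i,j)`-entry of the block `E_{a,b}(u)` (0-based blocks and entries),
extended by the identity on the diagonal blocks and by `0` below them; similarly `F`.
`D a` are the diagonal blocks and `D' a` their inverses.  Since the Gauss
decomposition is unique, this data consists exactly of the quasideterminant blocks. -/
structure Gauss [Ring A] [Algebra ℂ A] (T : ℕ → ℕ → ℕ → A) (n : ℕ) (μ : ℕ → ℕ) where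
  D : ℕ → ℕ → ℕ → ℕ → A
  D' : ℕ → ℕ → ℕ → ℕ → A
  E : ℕ → ℕ → ℕ → ℕ → ℕ → A
  F : ℕ → ℕ → ℕ → ℕ → ℕ → A
  E_diag : ∀ a i j r, E a a i j r = if i = j ∧ r = 0 then 1 else 0
  E_low : ∀ a b i j r, b < a → E a b i j r = 0
  E_zero : ∀ a b i j, a < b → E a b i j 0 = 0
  F_diag : ∀ a i j r, F a a i j r = if i = j ∧ r = 0 then 1 else 0
  F_high : ∀ a b i j r, a < b → F a b i j r = 0
  F_zero : ∀ a b i j, b < a → F a b i j 0 = 0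
  D_zero : ∀ a i j, D a i j 0 = if i = j then (1 : A) else 0
  D_inv : ∀ a i j r, a < n → i < μ a → j < μ a →
    ∑ q ∈ Finset.range (μ a), ∑ e ∈ Finset.range (r + 1), D a i q e * D' a q j (r - e) =
      if i = j ∧ r = 0 then 1 else 0
  D_inv' : ∀ a i j r, a < n → i < μ a → j < μ a →
    ∑ q ∈ Finset.range (μ a), ∑ e ∈ Finset.range (r + 1), D' a i q e * D a q j (r - e) =
      if i = j ∧ r = 0 then 1 else 0
  decomp : ∀ a b i j r, a < n → b < n → i < μ a → j < μ b →
    T (off μ a + i) (off μ b + j) r =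
      ∑ c ∈ Finset.range n, ∑ q1 ∈ Finset.range (μ c), ∑ q2 ∈ Finset.range (μ c),
        ∑ e1 ∈ Finset.range (r + 1), ∑ e2 ∈ Finset.range (r + 1 - e1),
          F a c i q1 e1 * D c q1 q2 e2 * E c b q2 j (r - e1 - e2)

/-!
Write `x = u⁻¹` and `y = v⁻¹`, so that `u - v = (y - x) / (x y)` and every relation becomes an
identity of power series in `x` and `y`. On the first block row the Gauss decomposition reads
`t_{a,μ₀+j} = ∑_q t_{aq} E_{qj}` with `D = t` on the first diagonal block, so `E = D⁻¹ t`.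
Expanding `t_{c,μ₀+k}(v)` in the RTT relation and inverting `D(v)` gives
`(y - x) [t_{aβ}(x), E_{hk}(y)] = ± x y (D⁻¹ t)_{hβ}(y) Λ_{ak}` with
`Λ_{ak} = ∑_q t_{aq}(x) (E_{qk}(y) - E_{qk}(x))`. Taking the supercommutator of
`D⁻¹(x) D(x) = 1` with `E_{hk}(y)` gives the companion formula for `D⁻¹(x)`, and then `E = D⁻¹ t`
yields, for the defect `Δ_{jk}` of the claimed identity times `x y`,
`(y - x) Δ_{jk} = ± x y (y - x) [E_{hj}(y), E_{ik}(y)] ± x y Δ_{kj}`.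
Now `Δ` vanishes by strong induction on the total degree: this equation pushes vanishing along
each antidiagonal starting from the boundary `x⁰`, provided the one-variable supercommutator
`[E_{hj}(v), E_{ik}(v)]` vanishes in lower degree. It does: its coefficient of `v^{-m}` is
`∑_{a+b=m} C(a,b)` with `C(a,b) = [E_{ik}^{(a)}, E_{hj}^{(b)}]`, the steps `C(a+1,b) - C(a,b+1)`
are symmetric in `a, b` by the identity in lower degree, and such a sum vanishes.
-/

theorem sgn_add (a b : ZMod 2) : sgn (a + b) = sgn a * sgn b := by
  have h01 : ∀ c : ZMod 2, c = 0 ∨ c = 1 := by decide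
  rcases h01 a with rfl | rfl <;> rcases h01 b with rfl | rfl <;>
    simp [sgn, show (1 + 1 : ZMod 2) = 0 from rfl]

theorem sgn_mul_self (a : ZMod 2) : sgn a * sgn a = 1 := by
  rw [← sgn_add, CharTwo.add_self_eq_zero]; rfl

theorem sgn_zero : sgn 0 = 1 := rfl

theorem sgn_smul_sgn_smul {M : Type*} [AddCommGroup M] [Module ℂ M] (a b : ZMod 2) (x : M) :
    sgn a • sgn b • x = sgn (a + b) • x := by
  rw [smul_smul, sgn_add]

theorem sgn_smul_sgn_smul_self {M : Type*} [AddCommGroup M] [Module ℂ M] (a : ZMod 2) (x : M) :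
    sgn a • sgn a • x = x := by
  rw [smul_smul, sgn_mul_self, one_smul]

section Supercommutator

variable [Ring A] [Algebra ℂ A] (ε ε' : ℂ) (x y z : A)

theorem scomm_mul_left :
    scomm (ε * ε') (x * y) z = x * scomm ε y z + ε • (scomm ε' x z * y) := by
  simp only [scomm, mul_sub, sub_mul, smul_mul_assoc, mul_smul_comm, mul_assoc]
  module

theorem scomm_mul_right :
    scomm (ε * ε') x (y * z) = scomm ε x y * z + ε • (y * scomm ε' x z) := by
  simp only [scomm, mul_sub, sub_mul, smul_mul_assoc, mul_smul_comm, mul_assoc]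
  module

theorem mul_eq_scomm_add : x * y = scomm ε x y + ε • (y * x) := by
  simp [scomm]

theorem scomm_zero_left : scomm ε 0 y = 0 := by simp [scomm]

theorem scomm_zero_right : scomm ε x 0 = 0 := by simp [scomm]

theorem scomm_one_one_left : scomm 1 1 y = 0 := by simp [scomm]

theorem scomm_one_one_right : scomm 1 x 1 = 0 := by simp [scomm]

theorem scomm_sum_left {ι : Type*} (s : Finset ι) (f : ι → A) :
    scomm ε (∑ i ∈ s, f i) y = ∑ i ∈ s, scomm ε (f i) y := by
  simp only [scomm, Finset.sum_mul, Finset.mul_sum, Finset.smul_sum, Finset.sum_sub_distrib]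

theorem scomm_sum_right {ι : Type*} (s : Finset ι) (f : ι → A) :
    scomm ε x (∑ i ∈ s, f i) = ∑ i ∈ s, scomm ε x (f i) := by
  simp only [scomm, Finset.sum_mul, Finset.mul_sum, Finset.smul_sum, Finset.sum_sub_distrib]

theorem scomm_swap (hε : ε * ε = 1) : scomm ε y x = -(ε • scomm ε x y) := by
  simp only [scomm, smul_sub, smul_smul, hε, one_smul, neg_sub]

end Supercommutator

open PowerSeries Finset.HasAntidiagonal

section TwoVariableSeries

variable [Ring A]

/- In `A⟦X⟧⟦X⟧` the inner variable is `x = u⁻¹` and the outer one is `y = v⁻¹`. -/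
def inX : A⟦X⟧ →+* A⟦X⟧⟦X⟧ := C

def inY : A⟦X⟧ →+* A⟦X⟧⟦X⟧ := map C

def xv : A⟦X⟧⟦X⟧ := inX X

def yv : A⟦X⟧⟦X⟧ := X

def cf (r s : ℕ) : A⟦X⟧⟦X⟧ →+ A :=
  (coeff r).toAddMonoidHom.comp (coeff s).toAddMonoidHom

theorem cf_apply (r s : ℕ) (P : A⟦X⟧⟦X⟧) : cf r s P = coeff r (coeff s P) := rfl

theorem ext_cf {P Q : A⟦X⟧⟦X⟧} (h : ∀ r s, cf r s P = cf r s Q) : P = Q :=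
  ext fun s => ext fun r => h r s

theorem cf_smul [Algebra ℂ A] (r s : ℕ) (c : ℂ) (P : A⟦X⟧⟦X⟧) :
    cf r s (c • P) = c • cf r s P := rfl

theorem cf_inX (r s : ℕ) (f : A⟦X⟧) : cf r s (inX f) = if s = 0 then coeff r f else 0 := by
  rcases s with _ | s <;> simp [cf_apply, inX, coeff_C]

theorem cf_inY (r s : ℕ) (f : A⟦X⟧) : cf r s (inY f) = if r = 0 then coeff s f else 0 := by
  rcases r with _ | r <;> simp [cf_apply, inY, coeff_C]

theorem cf_inX_mul_inY (r s : ℕ) (f g : A⟦X⟧) :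
    cf r s (inX f * inY g) = coeff r f * coeff s g := by
  simp [cf_apply, inX, inY, coeff_C_mul]

theorem cf_inY_mul_inX (r s : ℕ) (f g : A⟦X⟧) :
    cf r s (inY f * inX g) = coeff s f * coeff r g := by
  simp [cf_apply, inX, inY, coeff_mul_C]

theorem cf_succ_xv_mul (r s : ℕ) (P : A⟦X⟧⟦X⟧) : cf (r + 1) s (xv * P) = cf r s P := by
  simp [cf_apply, xv, inX, coeff_C_mul, coeff_succ_X_mul]

theorem cf_zero_xv_mul (s : ℕ) (P : A⟦X⟧⟦X⟧) : cf 0 s (xv * P) = 0 := by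
  simp [cf_apply, xv, inX, coeff_C_mul]

theorem cf_succ_yv_mul (r s : ℕ) (P : A⟦X⟧⟦X⟧) : cf r (s + 1) (yv * P) = cf r s P := by
  simp [cf_apply, yv, coeff_succ_X_mul]

theorem cf_zero_yv_mul (r : ℕ) (P : A⟦X⟧⟦X⟧) : cf r 0 (yv * P) = 0 := by
  simp [cf_apply, yv]

theorem commute_xv (P : A⟦X⟧⟦X⟧) : Commute xv P :=
  ext fun s => by simpa [xv, inX, coeff_C_mul, coeff_mul_C] using (commute_X (coeff s P)).symm.eq

theorem commute_yv (P : A⟦X⟧⟦X⟧) : Commute yv P := (commute_X P).symm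

def xy : A⟦X⟧⟦X⟧ := xv * yv

theorem commute_xy (P : A⟦X⟧⟦X⟧) : Commute xy P := (commute_xv P).mul_left (commute_yv P)

theorem commute_yv_sub_xv (P : A⟦X⟧⟦X⟧) : Commute (yv - xv) P :=
  (commute_yv P).sub_left (commute_xv P)

theorem mul_xy_mul (P Q : A⟦X⟧⟦X⟧) : P * (xy * Q) = xy * (P * Q) :=
  ((commute_xy P).left_comm Q).symm

theorem yv_sub_xv_mul_mul (P Q : A⟦X⟧⟦X⟧) : (yv - xv) * (P * Q) = P * ((yv - xv) * Q) :=
  (commute_yv_sub_xv P).left_comm Q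

theorem cf_succ_succ_xy_mul (r s : ℕ) (P : A⟦X⟧⟦X⟧) : cf (r + 1) (s + 1) (xy * P) = cf r s P := by
  rw [xy, mul_assoc, cf_succ_xv_mul, cf_succ_yv_mul]

theorem cf_zero_xy_mul (s : ℕ) (P : A⟦X⟧⟦X⟧) : cf 0 s (xy * P) = 0 := by
  rw [xy, mul_assoc, cf_zero_xv_mul]

theorem cf_xy_mul_zero (r : ℕ) (P : A⟦X⟧⟦X⟧) : cf r 0 (xy * P) = 0 := by
  rcases r with _ | r
  · exact cf_zero_xy_mul 0 P
  · rw [xy, mul_assoc, cf_succ_xv_mul, cf_zero_yv_mul]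

theorem cf_yv_sub_xv_mul (r s : ℕ) (P : A⟦X⟧⟦X⟧) :
    cf (r + 1) (s + 1) ((yv - xv) * P) = cf (r + 1) s P - cf r (s + 1) P := by
  rw [sub_mul, map_sub, cf_succ_yv_mul, cf_succ_xv_mul]

theorem cf_yv_sub_xv_mul_eq_zero {r s : ℕ} {P : A⟦X⟧⟦X⟧}
    (h : ∀ a b, a + b + 1 = r + s → cf a b P = 0) : cf r s ((yv - xv) * P) = 0 := by
  rcases r with _ | r <;> rcases s with _ | s
  · simp [sub_mul, cf_zero_xv_mul, cf_zero_yv_mul]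
  · rw [sub_mul, map_sub, cf_succ_yv_mul, cf_zero_xv_mul, h 0 s (by omega), sub_zero]
  · rw [sub_mul, map_sub, cf_zero_yv_mul, cf_succ_xv_mul, h r 0 (by omega), sub_zero]
  · rw [cf_yv_sub_xv_mul, h _ _ (by omega), h _ _ (by omega), sub_zero]

def tX (T : ℕ → ℕ → ℕ → A) (a b : ℕ) : A⟦X⟧⟦X⟧ := inX (mk (T a b))

def tY (T : ℕ → ℕ → ℕ → A) (a b : ℕ) : A⟦X⟧⟦X⟧ := inY (mk (T a b))

end TwoVariableSeries

theorem sum_antidiagonal_eq_zero_of_step_symm {K M : Type*} [DivisionRing K] [CharZero K]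
    [AddCommGroup M] [Module K M] (C : ℕ → ℕ → M) {m : ℕ} (hleft : C 0 m = 0)
    (hright : C m 0 = 0)
    (hsymm : ∀ a b, a + b + 1 = m → C (a + 1) b - C a (b + 1) = C (b + 1) a - C b (a + 1)) :
    ∑ x ∈ antidiagonal m, C x.1 x.2 = 0 := by
  rcases m with _ | n
  · simpa using hleft
  set S := ∑ x ∈ antidiagonal (n + 1), C x.1 x.2
  -- Weighted by `a + 1` and by `b + 1`, the steps telescope to `-S` and to `S`.
  have hfst : ∑ x ∈ antidiagonal n, (x.1 + 1) • (C (x.1 + 1) x.2 - C x.1 (x.2 + 1)) = -S := by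
    have h₁ := Finset.Nat.sum_antidiagonal_succ (f := fun x => x.1 • C x.1 x.2) (n := n)
    have h₂ := Finset.Nat.sum_antidiagonal_succ' (f := fun x => (x.1 + 1) • C x.1 x.2) (n := n)
    simp only [zero_smul, zero_add, hright, smul_zero] at h₁ h₂
    simp only [smul_sub, Finset.sum_sub_distrib]
    rw [← h₁, ← h₂, ← Finset.sum_sub_distrib]
    simp only [add_smul, one_smul, sub_add_cancel_left, Finset.sum_neg_distrib, S]
  have hsnd : ∑ x ∈ antidiagonal n, (x.2 + 1) • (C (x.1 + 1) x.2 - C x.1 (x.2 + 1)) = S := by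
    have h₁ := Finset.Nat.sum_antidiagonal_succ (f := fun x => (x.2 + 1) • C x.1 x.2) (n := n)
    have h₂ := Finset.Nat.sum_antidiagonal_succ' (f := fun x => x.2 • C x.1 x.2) (n := n)
    simp only [zero_smul, zero_add, hleft, smul_zero] at h₁ h₂
    simp only [smul_sub, Finset.sum_sub_distrib]
    rw [← h₁, ← h₂, ← Finset.sum_sub_distrib]
    simp only [add_smul, one_smul, add_sub_cancel_left, S]
  have hswap : ∑ x ∈ antidiagonal n, (x.1 + 1) • (C (x.1 + 1) x.2 - C x.1 (x.2 + 1)) =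
      ∑ x ∈ antidiagonal n, (x.2 + 1) • (C (x.1 + 1) x.2 - C x.1 (x.2 + 1)) := by
    rw [← Finset.Nat.sum_antidiagonal_swap]
    refine Finset.sum_congr rfl fun x hx => ?_
    rw [mem_antidiagonal] at hx
    simp only [Prod.fst_swap, Prod.snd_swap, hsymm x.2 x.1 (by omega)]
  have h2S : (2 : K) • S = 0 := by
    rw [two_smul]
    nth_rewrite 1 [← neg_neg S]
    rw [← hfst, hswap, hsnd, neg_add_cancel]
  simpa using h2S

section Collapse

variable {R : Type*} [Semiring R] {m : ℕ}

theorem sum_inv_mul_sum_mul {M M' : ℕ → ℕ → R}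
    (hinv : ∀ a b, a < m → b < m → ∑ c ∈ Finset.range m, M' a c * M c b = if a = b then 1 else 0)
    (Φ : ℕ → R) {h : ℕ} (hh : h < m) :
    ∑ c ∈ Finset.range m, M' h c * ∑ q ∈ Finset.range m, M c q * Φ q = Φ h := by
  simp_rw [Finset.mul_sum, ← mul_assoc]
  rw [Finset.sum_comm]
  simp_rw [← Finset.sum_mul]
  rw [Finset.sum_congr rfl fun q hq => by rw [hinv h q hh (Finset.mem_range.1 hq)]]
  simp [hh]

theorem sum_sum_mul_mul_inv {M M' : ℕ → ℕ → R}
    (hinv : ∀ a b, a < m → b < m → ∑ c ∈ Finset.range m, M a c * M' c b = if a = b then 1 else 0)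
    (Φ : ℕ → R) {b : ℕ} (hb : b < m) :
    ∑ q ∈ Finset.range m, (∑ t ∈ Finset.range m, Φ t * M t q) * M' q b = Φ b := by
  simp_rw [Finset.sum_mul, mul_assoc]
  rw [Finset.sum_comm]
  simp_rw [← Finset.mul_sum]
  rw [Finset.sum_congr rfl fun t ht => by rw [hinv t b (Finset.mem_range.1 ht) hb]]
  simp [hb]

end Collapse

theorem mk_mul_mk {R : Type*} [Semiring R] (f g : ℕ → R) :
    mk f * mk g = mk fun r => ∑ e ∈ Finset.range (r + 1), f e * g (r - e) := by
  ext r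
  rw [coeff_mul, coeff_mk, Finset.Nat.sum_antidiagonal_eq_sum_range_succ_mk]
  simp

theorem off_zero (μ : ℕ → ℕ) : off μ 0 = 0 := rfl

theorem off_one (μ : ℕ → ℕ) : off μ 1 = μ 0 := by simp [off]

section GaussSeries

variable [Ring A] [Algebra ℂ A] {T : ℕ → ℕ → ℕ → A} {n : ℕ} {μ : ℕ → ℕ} (G : Gauss T n μ)

def dInvSeries (a b : ℕ) : A⟦X⟧ := mk (G.D' 0 a b)

def eSeries (i j : ℕ) : A⟦X⟧ := mk (G.E 0 1 i j)

theorem T_first_row (hn : 0 < n) {a b j : ℕ} (ha : a < μ 0) (hb : b < n) (hj : j < μ b)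
    (r : ℕ) :
    T a (off μ b + j) r = ∑ q ∈ Finset.range (μ 0), ∑ e ∈ Finset.range (r + 1),
      G.D 0 a q e * G.E 0 b q j (r - e) := by
  have h := G.decomp 0 b a j r hn hb ha hj
  rw [off_zero, zero_add] at h
  rw [h, Finset.sum_eq_single 0 ?_ (by simp [hn]), Finset.sum_eq_single a ?_ (by simp [ha])]
  · refine Finset.sum_congr rfl fun q _ => ?_
    rw [Finset.sum_eq_single 0 (fun e _ he => by simp [G.F_diag, he]) (by simp)]
    simp [G.F_diag]
  · intro q _ hq
    simp [G.F_diag, Ne.symm hq]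
  · intro c _ hc
    simp [G.F_high 0 c a _ _ (Nat.pos_of_ne_zero hc)]

theorem D_eq_T (hn : 0 < n) {a b : ℕ} (ha : a < μ 0) (hb : b < μ 0) (r : ℕ) :
    G.D 0 a b r = T a b r := by
  have h := T_first_row G hn ha hn hb r
  rw [off_zero, zero_add] at h
  rw [h, Finset.sum_eq_single b ?_ (by simp [hb]), Finset.sum_eq_single r ?_ (by simp)]
  · simp [G.E_diag]
  · intro e he her
    have : r - e ≠ 0 := by have := Finset.mem_range.1 he; omega
    simp [G.E_diag, this]
  · intro q _ hq
    exact Finset.sum_eq_zero fun e _ => by simp [G.E_diag, hq]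

theorem coeff_ite_one {R : Type*} [Semiring R] (c : Prop) [Decidable c] (r : ℕ) :
    coeff r (if c then (1 : R⟦X⟧) else 0) = if c ∧ r = 0 then 1 else 0 := by
  split_ifs <;> simp_all [coeff_one]

theorem sum_T_mul_dInvSeries (hn : 0 < n) {a b : ℕ} (ha : a < μ 0) (hb : b < μ 0) :
    ∑ q ∈ Finset.range (μ 0), mk (T a q) * dInvSeries G q b = if a = b then 1 else 0 := by
  ext r
  rw [coeff_ite_one, ← G.D_inv 0 a b r hn ha hb, map_sum]
  refine Finset.sum_congr rfl fun q hq => ?_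
  simp only [dInvSeries, mk_mul_mk, coeff_mk, D_eq_T G hn ha (Finset.mem_range.1 hq)]

theorem sum_dInvSeries_mul_T (hn : 0 < n) {a b : ℕ} (ha : a < μ 0) (hb : b < μ 0) :
    ∑ q ∈ Finset.range (μ 0), dInvSeries G a q * mk (T q b) = if a = b then 1 else 0 := by
  ext r
  rw [coeff_ite_one, ← G.D_inv' 0 a b r hn ha hb, map_sum]
  refine Finset.sum_congr rfl fun q hq => ?_
  simp only [dInvSeries, mk_mul_mk, coeff_mk, D_eq_T G hn (Finset.mem_range.1 hq) hb]

theorem T_eq_sum_T_mul_eSeries (hn : 1 < n) {a j : ℕ} (ha : a < μ 0) (hj : j < μ 1) :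
    mk (T a (μ 0 + j)) = ∑ q ∈ Finset.range (μ 0), mk (T a q) * eSeries G q j := by
  ext r
  have h := T_first_row G (by omega) ha hn (show j < μ 1 from hj) r
  rw [off_one] at h
  rw [coeff_mk, h, map_sum]
  refine Finset.sum_congr rfl fun q hq => ?_
  simp only [eSeries, mk_mul_mk, coeff_mk, D_eq_T G (by omega) ha (Finset.mem_range.1 hq)]

theorem eSeries_eq_sum_dInvSeries_mul_T (hn : 1 < n) {i j : ℕ} (hi : i < μ 0) (hj : j < μ 1) :
    eSeries G i j = ∑ b ∈ Finset.range (μ 0), dInvSeries G i b * mk (T b (μ 0 + j)) := by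
  rw [Finset.sum_congr rfl fun b hb => by
    rw [T_eq_sum_T_mul_eSeries G hn (Finset.mem_range.1 hb) hj]]
  exact (sum_inv_mul_sum_mul (fun a b ha hb => sum_dInvSeries_mul_T G (by omega) ha hb)
    (eSeries G · j) hi).symm

end GaussSeries

section RTTSeries

variable [Ring A] [Algebra ℂ A] {d : ℕ} {p : ℕ → ZMod 2}

theorem cf_scomm_inX_inY (ε : ℂ) (f g : A⟦X⟧) (r s : ℕ) :
    cf r s (scomm ε (inX f) (inY g)) = scomm ε (coeff r f) (coeff s g) := by
  rw [scomm, map_sub, cf_smul, cf_inX_mul_inY, cf_inY_mul_inX, scomm]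

theorem coeff_scomm (ε : ℂ) (f g : A⟦X⟧) (m : ℕ) :
    coeff m (scomm ε f g) = ∑ x ∈ antidiagonal m, scomm ε (coeff x.1 f) (coeff x.2 g) := by
  simp only [scomm, map_sub, coeff_smul, coeff_mul, Finset.smul_sum, Finset.sum_sub_distrib]
  rw [← Finset.Nat.sum_antidiagonal_swap (f := fun x => ε • (coeff x.1 g * coeff x.2 f))]
  rfl

theorem cf_scomm_inY_inY (ε : ℂ) (f g : A⟦X⟧) (r s : ℕ) :
    cf r s (scomm ε (inY f) (inY g)) = if r = 0 then coeff s (scomm ε f g) else 0 := by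
  simp only [scomm, map_sub, cf_smul, ← map_mul, cf_inY]
  split_ifs <;> simp

theorem yv_sub_xv_mul_scomm_tX_tY (S : RTT A d p) {α β γ δ : ℕ}
    (hα : α < d) (hβ : β < d) (hγ : γ < d) (hδ : δ < d) :
    (yv - xv) * scomm (sgn ((p α + p β) * (p γ + p δ))) (tX S.t α β) (tY S.t γ δ) =
      sgn (p α * p β + p α * p γ + p β * p γ) •
        (xy * (tX S.t γ β * tY S.t α δ - tY S.t γ β * tX S.t α δ)) := by
  have hrtt : ∀ r s, scomm (sgn ((p α + p β) * (p γ + p δ))) (S.t α β (r + 1)) (S.t γ δ s) -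
      scomm (sgn ((p α + p β) * (p γ + p δ))) (S.t α β r) (S.t γ δ (s + 1)) =
        sgn (p α * p β + p α * p γ + p β * p γ) •
          (S.t γ β r * S.t α δ s - S.t γ β s * S.t α δ r) := by
    intro r s
    rw [S.rtt α β γ δ (r + 1) s hα hβ hγ hδ, S.rtt α β γ δ r (s + 1) hα hβ hγ hδ, ← smul_sub]
    congr 1
    simp only [show ∀ g, r + 1 + s - 1 - g = r + s - g by omega,
      show ∀ g, r + (s + 1) - 1 - g = r + s - g by omega]
    rcases lt_trichotomy r s with h | rfl | h
    · rw [min_eq_left (by omega), min_eq_left (by omega), Finset.sum_range_succ,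
        add_sub_cancel_left, show r + s - r = s by omega]
    · simp
    · rw [min_eq_right (by omega), min_eq_right (by omega), Finset.sum_range_succ,
        show r + s - s = r by omega]
      abel
  refine ext_cf fun r s => ?_
  rcases r with _ | r <;> rcases s with _ | s
  · simp [sub_mul, cf_zero_xv_mul, cf_zero_yv_mul, cf_smul, cf_zero_xy_mul]
  · simp only [sub_mul, map_sub, cf_succ_yv_mul, cf_zero_xv_mul, cf_smul, cf_zero_xy_mul,
      cf_scomm_inX_inY, tX, tY, coeff_mk, S.t_zero]
    split_ifs with h
    · simp [h, CharTwo.add_self_eq_zero, sgn_zero, scomm_one_one_left]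
    · simp [scomm_zero_left]
  · simp only [sub_mul, map_sub, cf_zero_yv_mul, cf_succ_xv_mul, cf_smul, cf_xy_mul_zero,
      cf_scomm_inX_inY, tX, tY, coeff_mk, S.t_zero]
    split_ifs with h
    · simp [h, CharTwo.add_self_eq_zero, sgn_zero, scomm_one_one_right]
    · simp [scomm_zero_right]
  · simp only [tX, tY] at *
    rw [cf_yv_sub_xv_mul, cf_smul, cf_succ_succ_xy_mul, map_sub, cf_inX_mul_inY, cf_inY_mul_inX,
      cf_scomm_inX_inY, cf_scomm_inX_inY]
    simpa only [coeff_mk] using hrtt r s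

end RTTSeries

section GaussTwoVariables

variable [Ring A] [Algebra ℂ A] {T : ℕ → ℕ → ℕ → A} {n : ℕ} {μ : ℕ → ℕ}

def eX (G : Gauss T n μ) (i j : ℕ) : A⟦X⟧⟦X⟧ := inX (eSeries G i j)

def eY (G : Gauss T n μ) (i j : ℕ) : A⟦X⟧⟦X⟧ := inY (eSeries G i j)

def dInvX (G : Gauss T n μ) (a b : ℕ) : A⟦X⟧⟦X⟧ := inX (dInvSeries G a b)

def dInvY (G : Gauss T n μ) (a b : ℕ) : A⟦X⟧⟦X⟧ := inY (dInvSeries G a b)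

def lam (G : Gauss T n μ) (a k : ℕ) : A⟦X⟧⟦X⟧ :=
  ∑ q ∈ Finset.range (μ 0), tX T a q * (eY G q k - eX G q k)

variable (G : Gauss T n μ)

theorem tX_eq_sum_tX_mul_eX (hn : 1 < n) {a j : ℕ} (ha : a < μ 0) (hj : j < μ 1) :
    tX T a (μ 0 + j) = ∑ q ∈ Finset.range (μ 0), tX T a q * eX G q j := by
  simp only [tX, eX, ← map_mul, ← map_sum, T_eq_sum_T_mul_eSeries G hn ha hj]

theorem tY_eq_sum_tY_mul_eY (hn : 1 < n) {a j : ℕ} (ha : a < μ 0) (hj : j < μ 1) :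
    tY T a (μ 0 + j) = ∑ q ∈ Finset.range (μ 0), tY T a q * eY G q j := by
  simp only [tY, eY, ← map_mul, ← map_sum, T_eq_sum_T_mul_eSeries G hn ha hj]

theorem eX_eq_sum_dInvX_mul_tX (hn : 1 < n) {i j : ℕ} (hi : i < μ 0) (hj : j < μ 1) :
    eX G i j = ∑ b ∈ Finset.range (μ 0), dInvX G i b * tX T b (μ 0 + j) := by
  simp only [tX, eX, dInvX, ← map_mul, ← map_sum, eSeries_eq_sum_dInvSeries_mul_T G hn hi hj]

theorem eY_eq_sum_dInvY_mul_tY (hn : 1 < n) {i j : ℕ} (hi : i < μ 0) (hj : j < μ 1) :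
    eY G i j = ∑ b ∈ Finset.range (μ 0), dInvY G i b * tY T b (μ 0 + j) := by
  simp only [tY, eY, dInvY, ← map_mul, ← map_sum, eSeries_eq_sum_dInvSeries_mul_T G hn hi hj]

theorem sum_tX_mul_dInvX (hn : 0 < n) {a b : ℕ} (ha : a < μ 0) (hb : b < μ 0) :
    ∑ q ∈ Finset.range (μ 0), tX T a q * dInvX G q b = if a = b then 1 else 0 := by
  simp only [tX, dInvX, ← map_mul, ← map_sum, sum_T_mul_dInvSeries G hn ha hb]
  split_ifs <;> simp

theorem sum_dInvX_mul_tX (hn : 0 < n) {a b : ℕ} (ha : a < μ 0) (hb : b < μ 0) :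
    ∑ q ∈ Finset.range (μ 0), dInvX G a q * tX T q b = if a = b then 1 else 0 := by
  simp only [tX, dInvX, ← map_mul, ← map_sum, sum_dInvSeries_mul_T G hn ha hb]
  split_ifs <;> simp

theorem sum_dInvY_mul_tY (hn : 0 < n) {a b : ℕ} (ha : a < μ 0) (hb : b < μ 0) :
    ∑ q ∈ Finset.range (μ 0), dInvY G a q * tY T q b = if a = b then 1 else 0 := by
  simp only [tY, dInvY, ← map_mul, ← map_sum, sum_dInvSeries_mul_T G hn ha hb]
  split_ifs <;> simp

theorem lam_eq (hn : 1 < n) {a k : ℕ} (ha : a < μ 0) (hk : k < μ 1) :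
    lam G a k = ∑ q ∈ Finset.range (μ 0), tX T a q * eY G q k - tX T a (μ 0 + k) := by
  rw [lam, tX_eq_sum_tX_mul_eX G hn ha hk, ← Finset.sum_sub_distrib]
  simp only [mul_sub]

theorem sum_dInvX_mul_lam (hn : 1 < n) {i k : ℕ} (hi : i < μ 0) :
    ∑ b ∈ Finset.range (μ 0), dInvX G i b * lam G b k = eY G i k - eX G i k :=
  sum_inv_mul_sum_mul (fun a b ha hb => sum_dInvX_mul_tX G (by omega) ha hb)
    (fun q => eY G q k - eX G q k) hi

def eDefect (p : ℕ → ZMod 2) (G : Gauss T n μ) (i h j k : ℕ) : A⟦X⟧⟦X⟧ :=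
  (yv - xv) * scomm (sgn ((p i + p (μ 0 + j)) * (p h + p (μ 0 + k)))) (eX G i j) (eY G h k) -
    sgn (p h * p (μ 0 + j) + p (μ 0 + j) * p (μ 0 + k) + p h * p (μ 0 + k)) •
      (xy * ((eY G i k - eX G i k) * (eY G h j - eX G h j)))

end GaussTwoVariables

section Commutators

variable [Ring A] [Algebra ℂ A] {d : ℕ} {p : ℕ → ZMod 2} {μ : ℕ → ℕ} (S : RTT A d p) {n : ℕ}
  (G : Gauss S.t n μ)

theorem sum_tY_mul_yv_sub_xv_mul_scomm_tX_eY (hn : 1 < n) (hμ : μ 0 + μ 1 ≤ d)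
    {a β c k : ℕ} (ha : a < μ 0) (hβ : β < d) (hc : c < μ 0) (hk : k < μ 1) :
    ∑ q ∈ Finset.range (μ 0), sgn ((p a + p β) * (p c + p q)) •
        (tY S.t c q * ((yv - xv) * scomm (sgn ((p a + p β) * (p q + p (μ 0 + k))))
          (tX S.t a β) (eY G q k))) =
      sgn (p a * p β + p a * p c + p β * p c) • (xy * (tY S.t c β * lam G a k)) := by
  set σ := sgn (p a * p β + p a * p c + p β * p c)
  have hsplit : ∀ q, sgn ((p a + p β) * (p c + p (μ 0 + k))) =
      sgn ((p a + p β) * (p c + p q)) * sgn ((p a + p β) * (p q + p (μ 0 + k))) := by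
    intro q
    rw [← sgn_add]
    congr 1
    have key : ∀ x y z w : ZMod 2, x * (y + w) = x * (y + z) + x * (z + w) := by decide
    exact key _ _ _ _
  have hexp : (yv - xv) * scomm (sgn ((p a + p β) * (p c + p (μ 0 + k))))
        (tX S.t a β) (tY S.t c (μ 0 + k)) =
      ∑ q ∈ Finset.range (μ 0), (σ • (xy * (tX S.t c β * tY S.t a q - tY S.t c β * tX S.t a q))) *
        eY G q k +
      ∑ q ∈ Finset.range (μ 0), sgn ((p a + p β) * (p c + p q)) •
        (tY S.t c q * ((yv - xv) * scomm (sgn ((p a + p β) * (p q + p (μ 0 + k))))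
          (tX S.t a β) (eY G q k))) := by
    rw [tY_eq_sum_tY_mul_eY G hn hc hk, scomm_sum_right, Finset.mul_sum, ← Finset.sum_add_distrib]
    refine Finset.sum_congr rfl fun q hq => ?_
    rw [hsplit q, scomm_mul_right, mul_add, ← mul_assoc,
      yv_sub_xv_mul_scomm_tX_tY S (by omega) hβ (by omega) (by simp at hq; omega),
      mul_smul_comm, yv_sub_xv_mul_mul]
  rw [lam_eq G hn ha hk, ← sub_eq_of_eq_add' hexp,
    yv_sub_xv_mul_scomm_tX_tY S (by omega) hβ (by omega) (by omega),
    tY_eq_sum_tY_mul_eY G hn ha hk]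
  simp only [mul_sub, sub_mul, Finset.mul_sum, smul_sub, Finset.smul_sum,
    smul_mul_assoc, mul_assoc, Finset.sum_sub_distrib]
  abel

theorem yv_sub_xv_mul_scomm_tX_eY (hn : 1 < n) (hμ : μ 0 + μ 1 ≤ d)
    {a β h k : ℕ} (ha : a < μ 0) (hβ : β < d) (hh : h < μ 0) (hk : k < μ 1) :
    (yv - xv) * scomm (sgn ((p a + p β) * (p h + p (μ 0 + k)))) (tX S.t a β) (eY G h k) =
      sgn (p a * p β + p a * p h + p β * p h) •
        (xy * ((∑ c ∈ Finset.range (μ 0), dInvY G h c * tY S.t c β) * lam G a k)) := by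
  set Φ : ℕ → A⟦X⟧⟦X⟧ := fun q => sgn ((p a + p β) * p q) •
    ((yv - xv) * scomm (sgn ((p a + p β) * (p q + p (μ 0 + k)))) (tX S.t a β) (eY G q k))
  have hrow : ∀ c, c < μ 0 → ∑ q ∈ Finset.range (μ 0), tY S.t c q * Φ q =
      sgn (p a * p β) • (xy * (tY S.t c β * lam G a k)) := by
    intro c hc
    have key₁ : ∀ x z w : ZMod 2, x * w = x * z + x * (z + w) := by decide
    have key₂ : ∀ x y z : ZMod 2, (x + y) * z + (x * y + x * z + y * z) = x * y := by decide
    rw [Finset.sum_congr rfl fun q _ => by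
        rw [mul_smul_comm, key₁ _ (p c), ← sgn_smul_sgn_smul],
      ← Finset.smul_sum, sum_tY_mul_yv_sub_xv_mul_scomm_tX_eY S G hn hμ ha hβ hc hk,
      sgn_smul_sgn_smul, key₂]
  have hΦ : Φ h = sgn (p a * p β) •
      (xy * ((∑ c ∈ Finset.range (μ 0), dInvY G h c * tY S.t c β) * lam G a k)) := by
    rw [← sum_inv_mul_sum_mul (fun a b ha hb => sum_dInvY_mul_tY G (by omega) ha hb) Φ hh,
      Finset.sum_congr rfl fun c hc => by
        rw [hrow c (Finset.mem_range.1 hc), mul_smul_comm, mul_xy_mul, ← mul_assoc (dInvY G h c)],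
      ← Finset.smul_sum, ← Finset.mul_sum, ← Finset.sum_mul]
  have key : ∀ x y z : ZMod 2, (x + y) * z + x * y = x * y + x * z + y * z := by decide
  rw [← sgn_smul_sgn_smul_self ((p a + p β) * p h) (_ * _), ← key, ← sgn_smul_sgn_smul]
  exact congrArg _ hΦ

theorem yv_sub_xv_mul_scomm_tX_eY_of_first_block (hn : 1 < n) (hμ : μ 0 + μ 1 ≤ d)
    {a b h k : ℕ} (ha : a < μ 0) (hb : b < μ 0) (hh : h < μ 0) (hk : k < μ 1) :
    (yv - xv) * scomm (sgn ((p a + p b) * (p h + p (μ 0 + k)))) (tX S.t a b) (eY G h k) =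
      if h = b then sgn (p b) • (xy * lam G a k) else 0 := by
  rw [yv_sub_xv_mul_scomm_tX_eY S G hn hμ ha (by omega) hh hk,
    sum_dInvY_mul_tY G (by omega) hh hb]
  split_ifs with hhb
  · subst hhb
    have key : ∀ x y : ZMod 2, x * y + x * y + y * y = y := by decide
    rw [key, one_mul]
  · simp

theorem yv_sub_xv_mul_scomm_tX_eY_of_second_block (hn : 1 < n) (hμ : μ 0 + μ 1 ≤ d)
    {a j h k : ℕ} (ha : a < μ 0) (hj : j < μ 1) (hh : h < μ 0) (hk : k < μ 1) :
    (yv - xv) * scomm (sgn ((p a + p (μ 0 + j)) * (p h + p (μ 0 + k)))) (tX S.t a (μ 0 + j))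
        (eY G h k) =
      sgn (p a * p (μ 0 + j) + p a * p h + p (μ 0 + j) * p h) • (xy * (eY G h j * lam G a k)) := by
  rw [yv_sub_xv_mul_scomm_tX_eY S G hn hμ ha (by omega) hh hk,
    ← eY_eq_sum_dInvY_mul_tY G hn hh hj]

theorem sum_yv_sub_xv_mul_scomm_dInvX_eY_mul_tX (hn : 1 < n) (hμ : μ 0 + μ 1 ≤ d)
    {i q h k : ℕ} (hi : i < μ 0) (hq : q < μ 0) (hh : h < μ 0) (hk : k < μ 1) :
    ∑ t ∈ Finset.range (μ 0), sgn (p t * (p h + p (μ 0 + k))) •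
        (((yv - xv) * scomm (sgn ((p i + p t) * (p h + p (μ 0 + k)))) (dInvX G i t) (eY G h k)) *
          tX S.t t q) =
      -(if h = q then sgn (p q * (p h + p (μ 0 + k)) + p q) • (xy * (eY G i k - eX G i k))
        else 0) := by
  set K := p (μ 0 + k)
  have hδ : (yv - xv) * scomm (sgn ((p i + p q) * (p h + K)))
      (∑ t ∈ Finset.range (μ 0), dInvX G i t * tX S.t t q) (eY G h k) = 0 := by
    rw [sum_dInvX_mul_tX G (by omega) hi hq]
    split_ifs with hiq
    · simp [hiq, CharTwo.add_self_eq_zero, sgn_zero, scomm_one_one_left]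
    · simp [scomm_zero_left]
  have key : ∀ x y z w : ZMod 2, (x + z) * w = (y + z) * w + (x + y) * w ∧
      (y + z) * w = z * w + y * w := by decide
  rw [scomm_sum_left, Finset.mul_sum, Finset.sum_congr rfl fun t ht => by
      rw [(key (p i) (p t) (p q) _).1, sgn_add, scomm_mul_left, mul_add, yv_sub_xv_mul_mul,
        yv_sub_xv_mul_scomm_tX_eY_of_first_block S G hn hμ (Finset.mem_range.1 ht) hq hh hk,
        mul_smul_comm, ← mul_assoc, (key (p i) (p t) (p q) _).2, ← sgn_smul_sgn_smul],
    Finset.sum_add_distrib, ← Finset.smul_sum] at hδ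
  have hfirst : ∑ t ∈ Finset.range (μ 0),
      dInvX G i t * (if h = q then sgn (p q) • (xy * lam G t k) else 0) =
        if h = q then sgn (p q) • (xy * (eY G i k - eX G i k)) else 0 := by
    split_ifs
    · simp only [mul_smul_comm, mul_xy_mul, ← Finset.smul_sum, ← Finset.mul_sum,
        sum_dInvX_mul_lam G hn hi]
    · simp
  rw [hfirst, add_comm, ← eq_neg_iff_add_eq_zero] at hδ
  rw [← sgn_smul_sgn_smul_self (p q * (p h + K)) (∑ t ∈ _, _), hδ, smul_neg]
  split_ifs <;> simp [sgn_smul_sgn_smul]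

theorem yv_sub_xv_mul_scomm_dInvX_eY (hn : 1 < n) (hμ : μ 0 + μ 1 ≤ d)
    {i b h k : ℕ} (hi : i < μ 0) (hb : b < μ 0) (hh : h < μ 0) (hk : k < μ 1) :
    (yv - xv) * scomm (sgn ((p i + p b) * (p h + p (μ 0 + k)))) (dInvX G i b) (eY G h k) =
      -(sgn (p b * p h + p b * p (μ 0 + k) + p h * p (μ 0 + k)) •
        (xy * ((eY G i k - eX G i k) * dInvX G h b))) := by
  set Θ : ℕ → A⟦X⟧⟦X⟧ := fun t => sgn (p t * (p h + p (μ 0 + k))) •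
    ((yv - xv) * scomm (sgn ((p i + p t) * (p h + p (μ 0 + k)))) (dInvX G i t) (eY G h k))
  have hΘ : Θ b = -(sgn (p h * (p h + p (μ 0 + k)) + p h) •
      (xy * ((eY G i k - eX G i k) * dInvX G h b))) := by
    rw [← sum_sum_mul_mul_inv (fun a b ha hb => sum_tX_mul_dInvX G (by omega) ha hb) Θ hb,
      Finset.sum_congr rfl fun q hq => by
        simp only [Θ, smul_mul_assoc]
        rw [sum_yv_sub_xv_mul_scomm_dInvX_eY_mul_tX S G hn hμ hi (Finset.mem_range.1 hq) hh hk]]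
    simp [ite_mul, Finset.sum_ite_eq, hh, mul_assoc]
  have key : ∀ x y z : ZMod 2, x * (y + z) + (y * (y + z) + y) = x * y + x * z + y * z := by decide
  rw [← sgn_smul_sgn_smul_self (p b * (p h + p (μ 0 + k))) (_ * _), ← key, ← sgn_smul_sgn_smul,
    ← smul_neg]
  exact congrArg _ hΘ

theorem yv_sub_xv_mul_scomm_eX_eY (hn : 1 < n) (hμ : μ 0 + μ 1 ≤ d)
    {i h j k : ℕ} (hi : i < μ 0) (hh : h < μ 0) (hj : j < μ 1) (hk : k < μ 1) :
    (yv - xv) * scomm (sgn ((p i + p (μ 0 + j)) * (p h + p (μ 0 + k)))) (eX G i j) (eY G h k) =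
      xy * ∑ b ∈ Finset.range (μ 0), sgn (p b * p (μ 0 + j) + p b * p h + p (μ 0 + j) * p h) •
          (dInvX G i b * (eY G h j * lam G b k)) -
        sgn (p h * p (μ 0 + j) + p (μ 0 + j) * p (μ 0 + k) + p h * p (μ 0 + k)) •
          (xy * ((eY G i k - eX G i k) * eX G h j)) := by
  have key : ∀ x y z w v : ZMod 2, (x + z) * (w + v) = (y + z) * (w + v) + (x + y) * (w + v) ∧
      (y + z) * (w + v) + (y * w + y * v + w * v) = w * z + z * v + w * v := by decide
  rw [eX_eq_sum_dInvX_mul_tX G hn hi hj, scomm_sum_left, Finset.mul_sum,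
    Finset.sum_congr rfl fun b hb => by
      rw [(key (p i) (p b) _ _ _).1, sgn_add, scomm_mul_left, mul_add, yv_sub_xv_mul_mul,
        yv_sub_xv_mul_scomm_tX_eY_of_second_block S G hn hμ (Finset.mem_range.1 hb) hj hh hk,
        mul_smul_comm, mul_smul_comm, ← mul_assoc (yv - xv),
        yv_sub_xv_mul_scomm_dInvX_eY S G hn hμ hi (Finset.mem_range.1 hb) hh hk, neg_mul,
        smul_neg, smul_mul_assoc, sgn_smul_sgn_smul, (key (p i) _ _ _ _).2, mul_assoc, mul_assoc],
    Finset.sum_add_distrib, Finset.sum_neg_distrib, ← Finset.smul_sum, ← Finset.mul_sum,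
    ← Finset.mul_sum, ← eX_eq_sum_dInvX_mul_tX G hn hh hj, ← sub_eq_add_neg]
  simp only [mul_smul_comm, mul_xy_mul, Finset.mul_sum]

theorem yv_sub_xv_mul_sum_dInvX_mul_eY_mul_lam (hn : 1 < n) (hμ : μ 0 + μ 1 ≤ d)
    {i h j k : ℕ} (hi : i < μ 0) (hh : h < μ 0) (hj : j < μ 1) :
    (yv - xv) * ∑ b ∈ Finset.range (μ 0),
        sgn (p b * p (μ 0 + j) + p b * p h + p (μ 0 + j) * p h) •
          (dInvX G i b * (eY G h j * lam G b k)) =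
      -(xy * ((eY G i j - eX G i j) * (eY G h k - eX G h k))) +
        sgn (p i * p h + p i * p (μ 0 + j) + p (μ 0 + j) * p h) •
          ((yv - xv) * (eY G h j * (eY G i k - eX G i k))) := by
  have key : ∀ x y z w : ZMod 2,
      y * w + y * z + w * z + (y * z + y * w + z * w) = 0 ∧
      y * w + y * z + w * z + (x + y) * (z + w) = x * z + x * w + w * z := by decide
  have hterm : ∀ b ∈ Finset.range (μ 0),
      (yv - xv) * (sgn (p b * p (μ 0 + j) + p b * p h + p (μ 0 + j) * p h) •
        (dInvX G i b * (eY G h j * lam G b k))) =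
      -(xy * ((eY G i j - eX G i j) * (dInvX G h b * lam G b k))) +
        sgn (p i * p h + p i * p (μ 0 + j) + p (μ 0 + j) * p h) •
          ((yv - xv) * (eY G h j * (dInvX G i b * lam G b k))) := by
    intro b hb
    rw [mul_smul_comm, ← mul_assoc (dInvX G i b),
      mul_eq_scomm_add (sgn ((p i + p b) * (p h + p (μ 0 + j)))) (dInvX G i b), add_mul, mul_add,
      smul_add, ← mul_assoc (yv - xv),
      yv_sub_xv_mul_scomm_dInvX_eY S G hn hμ hi (Finset.mem_range.1 hb) hh hj, neg_mul,
      smul_neg, smul_mul_assoc, sgn_smul_sgn_smul, (key (p i) _ _ _).1, sgn_zero, one_smul,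
      smul_mul_assoc, mul_smul_comm, sgn_smul_sgn_smul, (key (p i) _ _ _).2, mul_assoc, mul_assoc,
      mul_assoc]
  rw [Finset.mul_sum, Finset.sum_congr rfl hterm, Finset.sum_add_distrib, Finset.sum_neg_distrib,
    ← Finset.smul_sum]
  simp only [← Finset.mul_sum, sum_dInvX_mul_lam G hn hi,
    sum_dInvX_mul_lam G hn hh]

theorem yv_sub_xv_mul_eDefect (hn : 1 < n) (hμ : μ 0 + μ 1 ≤ d)
    {i h j k : ℕ} (hi : i < μ 0) (hh : h < μ 0) (hj : j < μ 1) (hk : k < μ 1) :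
    (yv - xv) * eDefect p G i h j k =
      sgn (p i * p h + p i * p (μ 0 + j) + p (μ 0 + j) * p h) •
        (xy * ((yv - xv) * scomm (sgn ((p i + p (μ 0 + k)) * (p h + p (μ 0 + j))))
          (eY G h j) (eY G i k))) +
      sgn (p h * p (μ 0 + j) + p (μ 0 + j) * p (μ 0 + k) + p h * p (μ 0 + k)) •
        (xy * eDefect p G i h k j) := by
  have key : ∀ x y z w : ZMod 2,
      x * y + x * z + z * y + (x + w) * (y + z) = y * z + z * w + y * w ∧
      y * z + z * w + y * w + (x + w) * (y + z) = x * y + x * z + z * y ∧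
      y * z + z * w + y * w + (y * w + w * z + y * z) = 0 := by decide
  have h₁ := congrArg sgn (key (p i) (p h) (p (μ 0 + j)) (p (μ 0 + k))).1
  have h₂ := congrArg sgn (key (p i) (p h) (p (μ 0 + j)) (p (μ 0 + k))).2.1
  have h₃ := congrArg sgn (key (p i) (p h) (p (μ 0 + j)) (p (μ 0 + k))).2.2
  rw [sgn_add] at h₁ h₂ h₃
  rw [sgn_zero] at h₃
  unfold eDefect
  rw [mul_sub, yv_sub_xv_mul_scomm_eX_eY S G hn hμ hi hh hj hk, mul_sub, yv_sub_xv_mul_mul,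
    yv_sub_xv_mul_sum_dInvX_mul_eY_mul_lam S G hn hμ hi hh hj]
  generalize sgn ((p i + p (μ 0 + k)) * (p h + p (μ 0 + j))) = ε at h₁ h₂ ⊢
  generalize sgn (p i * p h + p i * p (μ 0 + j) + p (μ 0 + j) * p h) = σ₁ at h₁ h₂ ⊢
  generalize sgn (p h * p (μ 0 + j) + p (μ 0 + j) * p (μ 0 + k) + p h * p (μ 0 + k)) = σ₂
    at h₁ h₂ h₃ ⊢
  generalize sgn (p h * p (μ 0 + k) + p (μ 0 + k) * p (μ 0 + j) + p h * p (μ 0 + j)) = σ₃ at h₃ ⊢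
  simp only [scomm, mul_sub, sub_mul, mul_add, mul_neg, smul_sub, mul_smul_comm, smul_smul,
    mul_xy_mul, h₁, h₂, h₃, one_smul]
  module

end Commutators

section Coefficients

variable [Ring A] [Algebra ℂ A] {T : ℕ → ℕ → ℕ → A} {n : ℕ} {μ : ℕ → ℕ} (G : Gauss T n μ)
  (p : ℕ → ZMod 2)

theorem cf_zero_eDefect (i h j k s : ℕ) : cf 0 s (eDefect p G i h j k) = 0 := by
  rw [eDefect, map_sub, cf_smul, cf_zero_xy_mul, smul_zero, sub_zero, sub_mul, map_sub,
    cf_zero_xv_mul, sub_zero]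
  rcases s with _ | s
  · exact cf_zero_yv_mul 0 _
  · rw [cf_succ_yv_mul, eX, eY, cf_scomm_inX_inY, eSeries, coeff_mk,
      G.E_zero 0 1 i j zero_lt_one, scomm_zero_left]

theorem cf_succ_succ_eDefect (i h j k r s : ℕ) :
    cf (r + 1) (s + 1) (eDefect p G i h j k) =
      scomm (sgn ((p i + p (μ 0 + j)) * (p h + p (μ 0 + k))))
          (G.E 0 1 i j (r + 1)) (G.E 0 1 h k s) -
        scomm (sgn ((p i + p (μ 0 + j)) * (p h + p (μ 0 + k))))
          (G.E 0 1 i j r) (G.E 0 1 h k (s + 1)) -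
      sgn (p h * p (μ 0 + j) + p (μ 0 + j) * p (μ 0 + k) + p h * p (μ 0 + k)) •
        ((if s = 0 then
            ∑ e ∈ Finset.range (r + 1), G.E 0 1 i k e * G.E 0 1 h j (r - e)
          else 0) -
         G.E 0 1 i k r * G.E 0 1 h j s - G.E 0 1 i k s * G.E 0 1 h j r +
         (if r = 0 then
            ∑ e ∈ Finset.range (s + 1), G.E 0 1 i k e * G.E 0 1 h j (s - e)
          else 0)) := by
  rw [eDefect, map_sub, cf_smul, cf_yv_sub_xv_mul, cf_succ_succ_xy_mul]
  simp only [eX, eY, cf_scomm_inX_inY, mul_sub, sub_mul, map_sub, ← map_mul, cf_inX, cf_inY,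
    cf_inX_mul_inY, cf_inY_mul_inX, eSeries, mk_mul_mk, coeff_mk]
  congr 2
  abel

theorem cf_scomm_eY_eY_eq_zero {i h j k m : ℕ}
    (hstep : ∀ a b, a + b + 1 = m → cf (a + 1) (b + 1) (eDefect p G i h k j) = 0)
    {r s : ℕ} (hrs : r + s = m) :
    cf r s (scomm (sgn ((p i + p (μ 0 + k)) * (p h + p (μ 0 + j)))) (eY G h j) (eY G i k)) = 0 := by
  rw [eY, eY, cf_scomm_inY_inY]
  split_ifs with hr
  · subst hr
    simp only [zero_add] at hrs
    subst hrs
    rw [scomm_swap _ _ _ (sgn_mul_self _), map_neg, coeff_smul, coeff_scomm,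
      sum_antidiagonal_eq_zero_of_step_symm (K := ℂ)
        (fun a b => scomm _ (coeff a (eSeries G i k)) (coeff b (eSeries G h j))),
      smul_zero, neg_zero]
    · simp [eSeries, G.E_zero 0 1 i k zero_lt_one, scomm_zero_left]
    · simp [eSeries, G.E_zero 0 1 h j zero_lt_one, scomm_zero_right]
    · intro a b hab
      have h₁ := hstep a b hab
      have h₂ := hstep b a (by omega)
      rw [cf_succ_succ_eDefect, sub_eq_zero] at h₁ h₂
      simp only [eSeries, coeff_mk]
      rw [h₁, h₂]
      congr 1
      abel
  · rfl

end Coefficients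

section Vanishing

variable [Ring A] [Algebra ℂ A] {d : ℕ} {p : ℕ → ZMod 2} {μ : ℕ → ℕ} (S : RTT A d p) {n : ℕ}
  (G : Gauss S.t n μ)

theorem cf_succ_eDefect_sub (hn : 1 < n) (hμ : μ 0 + μ 1 ≤ d)
    {i h j k : ℕ} (hi : i < μ 0) (hh : h < μ 0) (hj : j < μ 1) (hk : k < μ 1) (r s : ℕ) :
    cf (r + 1) s (eDefect p G i h j k) - cf r (s + 1) (eDefect p G i h j k) =
      sgn (p i * p h + p i * p (μ 0 + j) + p (μ 0 + j) * p h) •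
        cf r s ((yv - xv) * scomm (sgn ((p i + p (μ 0 + k)) * (p h + p (μ 0 + j))))
          (eY G h j) (eY G i k)) +
      sgn (p h * p (μ 0 + j) + p (μ 0 + j) * p (μ 0 + k) + p h * p (μ 0 + k)) •
        cf r s (eDefect p G i h k j) := by
  have h := congrArg (cf (r + 1) (s + 1)) (yv_sub_xv_mul_eDefect S G hn hμ hi hh hj hk)
  rwa [cf_yv_sub_xv_mul, map_add, cf_smul, cf_smul, cf_succ_succ_xy_mul,
    cf_succ_succ_xy_mul] at h

theorem eDefect_eq_zero (hn : 1 < n) (hμ : μ 0 + μ 1 ≤ d)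
    {i h j k : ℕ} (hi : i < μ 0) (hh : h < μ 0) (hj : j < μ 1) (hk : k < μ 1) :
    eDefect p G i h j k = 0 := by
  suffices ∀ N j' k', j' < μ 1 → k' < μ 1 → ∀ r s, r + s = N →
      cf r s (eDefect p G i h j' k') = 0 from
    ext_cf fun r s => by rw [this _ j k hj hk r s rfl, map_zero]
  intro N
  induction N using Nat.strong_induction_on with
  | _ N ih =>
  clear j k hj hk
  intro j k hj hk r
  induction r with
  | zero => intro s _; exact cf_zero_eDefect G p i h j k s
  | succ r ihr =>
    intro s hrs
    have hV : cf r s ((yv - xv) * scomm (sgn ((p i + p (μ 0 + k)) * (p h + p (μ 0 + j))))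
        (eY G h j) (eY G i k)) = 0 :=
      cf_yv_sub_xv_mul_eq_zero fun a b hab =>
        cf_scomm_eY_eY_eq_zero G p (fun a' b' hab' => ih _ (by omega) k j hk hj _ _ rfl) rfl
    have hD : cf r s (eDefect p G i h k j) = 0 := ih (r + s) (by omega) k j hk hj r s rfl
    have hstep := cf_succ_eDefect_sub S G hn hμ hi hh hj hk r s
    rw [hV, hD, smul_zero, smul_zero, add_zero, sub_eq_zero] at hstep
    rw [hstep]
    exact ihr (s + 1) (by omega)

end Vanishing

/-- The coefficient of `u^{-r} v^{-s}` of the identity. -/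
theorem statement8 [Ring A] [Algebra ℂ A] {d : ℕ} {p : ℕ → ZMod 2} {μ : ℕ → ℕ}
    (S : RTT A d p) (G : Gauss S.t 2 μ) (hd : off μ 2 = d) :
    ∀ i j h k r s : ℕ, i < μ 0 → j < μ 1 → h < μ 0 → k < μ 1 →
      scomm (sgn ((p i + p (μ 0 + j)) * (p h + p (μ 0 + k))))
          (G.E 0 1 i j (r + 1)) (G.E 0 1 h k s) -
        scomm (sgn ((p i + p (μ 0 + j)) * (p h + p (μ 0 + k))))
          (G.E 0 1 i j r) (G.E 0 1 h k (s + 1)) =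
      sgn (p h * p (μ 0 + j) + p (μ 0 + j) * p (μ 0 + k) + p h * p (μ 0 + k)) •
        ((if s = 0 then
            ∑ e ∈ Finset.range (r + 1), G.E 0 1 i k e * G.E 0 1 h j (r - e)
          else 0) -
         G.E 0 1 i k r * G.E 0 1 h j s - G.E 0 1 i k s * G.E 0 1 h j r +
         (if r = 0 then
            ∑ e ∈ Finset.range (s + 1), G.E 0 1 i k e * G.E 0 1 h j (s - e)
          else 0)) := by
  intro i j h k r s hi hj hh hk
  have hμ : μ 0 + μ 1 ≤ d := by simp [← hd, off, Finset.sum_range_succ]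
  have h := congrArg (cf (r + 1) (s + 1)) (eDefect_eq_zero S G one_lt_two hμ hi hh hj hk)
  rwa [cf_succ_succ_eDefect, map_zero, sub_eq_zero] at h

end SuperYangian
end
end

section
/- Under the isomorphism ζ_{M|N} : Y_μ(s) → Y_{←μ}(s†), the Gauss decomposition blocks transform as ζ(D_{a;i,j}(u)) = D'_{n+1-a; μ_a+1-i, μ_a+1-j}(u) for 1≤a≤n, ζ(E_{a;h,k}(u)) = -F_{n-a; μ_a+1-h, μ_{a+1}+1-k}(u) and ζ(F_{a;k,h}(u)) = -E_{n-a; μ_{a+1}+1-k, μ_a+1-h}(u) for 1≤a≤n-1, where ←μ = (μ_n,...,μ_1) and the right-hand blocks are taken with respect to ←μ. -/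
/-!
Write `T = F D E` for the block Gauss decomposition of `T(u)` with respect to `μ`. Block
unitriangular matrices over any ring are invertible, with block unitriangular inverses (the
geometric series of a nilpotent matrix), so `T⁻¹ = E⁻¹ D⁻¹ F⁻¹`. Reversing the order of rows and
columns turns this into lower unitriangular × block diagonal × upper unitriangular with respect
to `←μ`, and by uniqueness of such decompositions the Gauss blocks of `τ` are the reversals of
`E⁻¹`, `D⁻¹` and `F⁻¹`. Between adjacent blocks the inverse of a unitriangular matrix is just its
negative, e.g. `(E⁻¹)_{a,a+1} = -E_{a,a+1}`.
-/

noncomputable section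

open Finset OrderDual

namespace Matrix

variable {m m' α R : Type*} {b : m → α}

def IsBlockDiagonal [Zero R] (D : Matrix m m R) (b : m → α) : Prop :=
  ∀ ⦃i j⦄, b i ≠ b j → D i j = 0

theorem IsBlockDiagonal.submatrix {β : Type*} [Zero R] {M : Matrix m m R}
    (hM : M.IsBlockDiagonal b) (f : m' → m) {b' : m' → β}
    (hb : ∀ i j, b (f i) = b (f j) → b' i = b' j) : (M.submatrix f f).IsBlockDiagonal b' :=
  fun i j hij => hM fun h => hij (hb i j h)

theorem IsBlockDiagonal.ext [Zero R] {M N : Matrix m m R} (hM : M.IsBlockDiagonal b)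
    (hN : N.IsBlockDiagonal b) (h : ∀ i j, b i = b j → M i j = N i j) : M = N := by
  ext i j
  by_cases hij : b i = b j
  · exact h i j hij
  · rw [hM hij, hN hij]

variable [LinearOrder α]

def StrictBlockTriangular [Zero R] (M : Matrix m m R) (b : m → α) : Prop :=
  ∀ ⦃i j⦄, b j ≤ b i → M i j = 0

def BlockUnitriangular [DecidableEq m] [Ring R] (U : Matrix m m R) (b : m → α) : Prop :=
  (U - 1).StrictBlockTriangular b

section Zero

variable [Zero R] {M : Matrix m m R}

theorem StrictBlockTriangular.blockTriangular (hM : M.StrictBlockTriangular b) :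
    M.BlockTriangular b :=
  fun _ _ h => hM h.le

theorem IsBlockDiagonal.blockTriangular (hM : M.IsBlockDiagonal b) : M.BlockTriangular b :=
  fun _ _ h => hM h.ne'

theorem IsBlockDiagonal.blockTriangular_toDual (hM : M.IsBlockDiagonal b) :
    M.BlockTriangular (toDual ∘ b) :=
  fun _ _ h => hM (ne_of_lt h)

theorem isBlockDiagonal_of_blockTriangular (h : M.BlockTriangular b)
    (h' : M.BlockTriangular (toDual ∘ b)) : M.IsBlockDiagonal b := fun _ _ hij =>
  hij.lt_or_gt.elim (fun hlt => h' hlt) (fun hgt => h hgt)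

end Zero

variable [Ring R] {M N U V : Matrix m m R}

theorem StrictBlockTriangular.neg (hM : M.StrictBlockTriangular b) :
    (-M).StrictBlockTriangular b :=
  fun i j h => by rw [neg_apply, hM h, neg_zero]

theorem StrictBlockTriangular.add (hM : M.StrictBlockTriangular b)
    (hN : N.StrictBlockTriangular b) : (M + N).StrictBlockTriangular b :=
  fun i j h => by rw [add_apply, hM h, hN h, add_zero]

section DecidableEq

variable [DecidableEq m]

theorem BlockUnitriangular.apply_of_eq (hU : U.BlockUnitriangular b) {i j : m} (h : b i = b j) :
    U i j = (1 : Matrix m m R) i j :=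
  sub_eq_zero.1 (hU h.ge)

theorem BlockUnitriangular.blockTriangular (hU : U.BlockUnitriangular b) :
    U.BlockTriangular b := by
  simpa using (StrictBlockTriangular.blockTriangular hU).add (blockTriangular_one (b := b))

theorem BlockUnitriangular.submatrix {β : Type*} [LinearOrder β] [DecidableEq m']
    (hU : U.BlockUnitriangular b) (e : m' ≃ m) {b' : m' → β}
    (hb : ∀ i j, b' j ≤ b' i → b (e j) ≤ b (e i)) :
    (U.submatrix e e).BlockUnitriangular b' := by
  intro i j hij
  rw [← submatrix_one_equiv e]
  exact hU (hb i j hij)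

end DecidableEq

variable [Fintype m]

theorem StrictBlockTriangular.mul_blockTriangular (hM : M.StrictBlockTriangular b)
    (hN : N.BlockTriangular b) : (M * N).StrictBlockTriangular b := by
  intro i j hij
  rw [mul_apply]
  refine sum_eq_zero fun g _ => ?_
  rcases le_or_gt (b g) (b i) with hgi | hig
  · rw [hM hgi, zero_mul]
  · rw [hN (hij.trans_lt hig), mul_zero]

variable [DecidableEq m]

/-- Rank the positions by `h i = #{g | b g < b i} < card m`: each factor of `M` strictly
raises the rank. -/
theorem StrictBlockTriangular.pow_card_eq_zero (hM : M.StrictBlockTriangular b) :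
    M ^ Fintype.card m = 0 := by
  set h : m → ℕ := fun i => #{g | b g < b i}
  have h_lt : ∀ {g j}, b g < b j → h g < h j := fun {g j} hgj =>
    card_lt_card <| (ssubset_iff_of_subset fun x hx => by
      simp only [mem_filter, mem_univ, true_and] at hx ⊢; exact hx.trans hgj).2
      ⟨g, by simpa using hgj, by simp⟩
  have key : ∀ k i j, h j < h i + k → (M ^ k) i j = 0 := by
    intro k
    induction k with
    | zero => intro i j hij; exact one_apply_ne fun hij' => by subst hij'; omega
    | succ k ih =>
      intro i j hij
      rw [pow_succ, mul_apply]
      refine sum_eq_zero fun g _ => ?_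
      by_cases hg : h g < h i + k
      · rw [ih i g hg, zero_mul]
      · rw [hM (not_lt.1 fun hgj => by have := h_lt hgj; omega), mul_zero]
  ext i j
  exact key _ i j ((card_lt_univ_of_notMem (x := j) (by simp)).trans_le (Nat.le_add_left _ _))

namespace BlockUnitriangular

theorem mul (hU : U.BlockUnitriangular b) (hV : V.BlockUnitriangular b) :
    (U * V).BlockUnitriangular b := by
  have h : U * V - 1 = (U - 1) * V + (V - 1) := by noncomm_ring
  unfold BlockUnitriangular
  rw [h]
  exact (StrictBlockTriangular.mul_blockTriangular hU hV.blockTriangular).add hV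

theorem mul_apply_of_eq (hU : U.BlockUnitriangular b) (hM : M.BlockTriangular b) {i j : m}
    (h : b i = b j) : (U * M) i j = M i j := by
  rw [mul_apply, sum_eq_single i]
  · rw [hU.apply_of_eq rfl, one_apply_eq, one_mul]
  · intro g _ hgi
    rcases lt_or_ge (b g) (b i) with hlt | hge
    · rw [hU.blockTriangular hlt, zero_mul]
    rcases hge.lt_or_eq with hlt | heq
    · rw [hM (h ▸ hlt), mul_zero]
    · rw [hU.apply_of_eq heq, one_apply_ne hgi.symm, zero_mul]
  · simp

theorem mul_apply_of_eq' (hU : U.BlockUnitriangular b) (hM : M.BlockTriangular b) {i j : m}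
    (h : b i = b j) : (M * U) i j = M i j := by
  rw [mul_apply, sum_eq_single j]
  · rw [hU.apply_of_eq rfl, one_apply_eq, mul_one]
  · intro g _ hgj
    rcases lt_or_ge (b g) (b i) with hlt | hge
    · rw [hM hlt, zero_mul]
    rcases hge.lt_or_eq with hlt | heq
    · rw [hU.blockTriangular (h ▸ hlt), mul_zero]
    · rw [hU.apply_of_eq (heq.symm.trans h), one_apply_ne hgj, mul_zero]
  · simp

theorem exists_inverse (hU : U.BlockUnitriangular b) :
    ∃ V, U * V = 1 ∧ V * U = 1 ∧ V.BlockUnitriangular b := by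
  set N := 1 - U
  have hN : N.StrictBlockTriangular b := by simpa [N] using hU.neg
  have hNU : 1 - N = U := sub_sub_cancel 1 U
  set V := ∑ k ∈ range (Fintype.card m), N ^ k
  have hUV : U * V = 1 := by rw [← hNU, mul_neg_geom_sum, hN.pow_card_eq_zero, sub_zero]
  have hV : V.BlockTriangular b :=
    Subsemiring.sum_mem (blockTriangularSubsemiring R b) fun k _ => hN.blockTriangular.pow k
  refine ⟨V, hUV, by rw [← hNU, geom_sum_mul_neg, hN.pow_card_eq_zero, sub_zero], ?_⟩
  have h : V - 1 = N * V := by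
    calc V - 1 = (N + U) * V - U * V := by rw [hUV, sub_add_cancel, one_mul]
      _ = N * V := by noncomm_ring
  unfold BlockUnitriangular
  rw [h]
  exact hN.mul_blockTriangular hV

theorem inverse_apply_of_covBy (hU : U.BlockUnitriangular b) (hV : V.BlockUnitriangular b)
    (hUV : U * V = 1) {i j : m} (hij : b i ⋖ b j) : V i j = -U i j := by
  have hne : i ≠ j := fun h => hij.lt.ne (congrArg b h)
  have hterm : ∀ g,
      U i g * V g j = (if g = i then V i j else 0) + (if g = j then U i j else 0) := by
    intro g
    rcases lt_trichotomy (b g) (b i) with hgi | hgi | hig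
    · have hgj : g ≠ j := fun h => (hgi.trans hij.lt).ne (congrArg b h)
      rw [hU.blockTriangular hgi, zero_mul, if_neg (fun h => hgi.ne (congrArg b h)), if_neg hgj,
        add_zero]
    · have hgj : g ≠ j := fun h => hij.lt.ne (hgi.symm.trans (congrArg b h))
      rw [hU.apply_of_eq hgi.symm, if_neg hgj, add_zero]
      by_cases hg : g = i
      · rw [if_pos hg, hg, one_apply_eq, one_mul]
      · rw [if_neg hg, one_apply_ne (Ne.symm hg), zero_mul]
    · rw [if_neg (fun h => hig.ne' (congrArg b h))]
      rcases lt_trichotomy (b g) (b j) with hgj | hgj | hjg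
      · exact absurd hgj (hij.2 hig)
      · rw [hV.apply_of_eq hgj, zero_add]
        by_cases hg : g = j
        · rw [if_pos hg, hg, one_apply_eq, mul_one]
        · rw [if_neg hg, one_apply_ne hg, mul_zero]
      · rw [hV.blockTriangular hjg, mul_zero, if_neg (fun h => hjg.ne' (congrArg b h)), add_zero]
  have h := congrFun (congrFun hUV i) j
  rw [mul_apply, sum_congr rfl fun g _ => hterm g, sum_add_distrib, sum_ite_eq', sum_ite_eq',
    if_pos (mem_univ _), if_pos (mem_univ _), one_apply_ne hne] at h
  exact eq_neg_of_add_eq_zero_left h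

end BlockUnitriangular

theorem ldu_unique {L₁ L₂ D₁ D₂ U₁ U₂ : Matrix m m R}
    (hL₁ : L₁.BlockUnitriangular (toDual ∘ b)) (hL₂ : L₂.BlockUnitriangular (toDual ∘ b))
    (hD₁ : D₁.IsBlockDiagonal b) (hD₂ : D₂.IsBlockDiagonal b)
    (hU₁ : U₁.BlockUnitriangular b) (hU₂ : U₂.BlockUnitriangular b) (hD : IsUnit D₁)
    (h : L₁ * D₁ * U₁ = L₂ * D₂ * U₂) : L₁ = L₂ ∧ D₁ = D₂ ∧ U₁ = U₂ := by
  obtain ⟨L₂', hL₂L₂', hL₂'L₂, hL₂'⟩ := hL₂.exists_inverse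
  obtain ⟨U₁', hU₁U₁', hU₁'U₁, hU₁'⟩ := hU₁.exists_inverse
  have hL := hL₂'.mul hL₁
  have hU := hU₂.mul hU₁'
  have hX : L₂' * L₁ * D₁ = D₂ * (U₂ * U₁') := by
    calc L₂' * L₁ * D₁ = L₂' * (L₁ * D₁ * U₁) * U₁' := by
          simp only [mul_assoc, hU₁U₁', mul_one]
      _ = L₂' * L₂ * (D₂ * (U₂ * U₁')) := by rw [h]; simp only [mul_assoc]
      _ = D₂ * (U₂ * U₁') := by rw [hL₂'L₂, one_mul]
  have hXdiag : (L₂' * L₁ * D₁).IsBlockDiagonal b :=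
    isBlockDiagonal_of_blockTriangular
      (hX ▸ hD₂.blockTriangular.mul hU.blockTriangular)
      (hL.blockTriangular.mul hD₁.blockTriangular_toDual)
  have hXD₁ : L₂' * L₁ * D₁ = D₁ :=
    hXdiag.ext hD₁ fun i j hij => hL.mul_apply_of_eq hD₁.blockTriangular_toDual hij
  have hXD₂ : L₂' * L₁ * D₁ = D₂ :=
    hXdiag.ext hD₂ fun i j hij => hX ▸ hU.mul_apply_of_eq' hD₂.blockTriangular hij
  have hD₁₂ : D₁ = D₂ := hXD₁.symm.trans hXD₂
  have hL1 : L₂' * L₁ = 1 := hD.mul_left_injective (by simpa using hXD₁)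
  have hU1 : U₂ * U₁' = 1 :=
    hD.mul_right_injective (by simpa [hD₁₂] using hX.symm.trans hXD₂)
  refine ⟨?_, hD₁₂, ?_⟩
  · rw [← one_mul L₁, ← hL₂L₂', mul_assoc, hL1, mul_one]
  · rw [← mul_one U₂, ← hU₁'U₁, ← mul_assoc, hU1, one_mul]

end Matrix

namespace SuperYangian

open PowerSeries Matrix

variable {A : Type*}

theorem off_succ (μ : ℕ → ℕ) (a : ℕ) : off μ (a + 1) = off μ a + μ a := sum_range_succ _ _

theorem off_mono (μ : ℕ → ℕ) {a b : ℕ} (h : a ≤ b) : off μ a ≤ off μ b :=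
  sum_le_sum_of_subset (range_subset_range.2 h)

theorem off_add_lt_off {μ : ℕ → ℕ} {a b i : ℕ} (hab : a < b) (hi : i < μ a) :
    off μ a + i < off μ b :=
  (off_succ μ a ▸ Nat.add_lt_add_left hi _).trans_le (off_mono μ hab)

theorem off_add_inj {μ : ℕ → ℕ} {a b i j : ℕ} (hi : i < μ a) (hj : j < μ b)
    (h : off μ a + i = off μ b + j) : a = b ∧ i = j := by
  rcases lt_trichotomy a b with hab | rfl | hba
  · exact absurd h ((off_add_lt_off hab hi).trans_le (Nat.le_add_right _ _)).ne
  · exact ⟨rfl, by omega⟩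
  · exact absurd h.symm ((off_add_lt_off hba hj).trans_le (Nat.le_add_right _ _)).ne

theorem sum_range_off {M : Type*} [AddCommMonoid M] (μ : ℕ → ℕ) (n : ℕ) (f : ℕ → M) :
    ∑ g ∈ range (off μ n), f g = ∑ a ∈ range n, ∑ i ∈ range (μ a), f (off μ a + i) := by
  induction n with
  | zero => simp [off]
  | succ n ih => rw [off_succ, sum_range_add, ih, sum_range_succ]

theorem off_reverse_add_off {μ : ℕ → ℕ} {n m : ℕ} (hm : m ≤ n) :
    off (fun b => μ (n - 1 - b)) m + off μ (n - m) = off μ n := by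
  induction m with
  | zero => simp [off]
  | succ m ih =>
    have h : n - m = n - (m + 1) + 1 := by omega
    rw [off_succ, ← ih (by omega), h, off_succ, show n - 1 - m = n - (m + 1) by omega]
    ring

theorem off_sub_off_reverse {μ : ℕ → ℕ} {n c i : ℕ} (hc : c < n) (hi : i < μ (n - 1 - c)) :
    off μ n - 1 - (off (fun b => μ (n - 1 - b)) c + i) =
      off μ (n - 1 - c) + (μ (n - 1 - c) - 1 - i) := by
  have h1 := off_reverse_add_off (μ := μ) hc.le
  have h2 := off_succ μ (n - 1 - c)
  rw [show n - 1 - c + 1 = n - c by omega] at h2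
  omega

/-- Entry `i` of block `a`, which sits at position `off μ a + i`. -/
abbrev BlockPos (n : ℕ) (μ : ℕ → ℕ) : Type :=
  ↥((range n).sigma fun a => range (μ a))

namespace BlockPos

variable {n : ℕ} {μ : ℕ → ℕ}

theorem fst_lt (p : BlockPos n μ) : p.1.1 < n := mem_range.1 (mem_sigma.1 p.2).1

theorem snd_lt (p : BlockPos n μ) : p.1.2 < μ p.1.1 := mem_range.1 (mem_sigma.1 p.2).2

theorem val_eq_iff {p q : BlockPos n μ} :
    (p : Σ _ : ℕ, ℕ) = q ↔ off μ p.1.1 + p.1.2 = off μ q.1.1 + q.1.2 := by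
  refine ⟨fun h => by rw [h], fun h => ?_⟩
  obtain ⟨h1, h2⟩ := off_add_inj p.snd_lt q.snd_lt h
  exact Sigma.ext h1 (heq_of_eq h2)

theorem eq_iff {p q : BlockPos n μ} : p = q ↔ p.1.1 = q.1.1 ∧ p.1.2 = q.1.2 := by
  rw [Subtype.ext_iff, Sigma.ext_iff, heq_iff_eq]

end BlockPos

section

variable {n : ℕ} {μ : ℕ → ℕ}

def blockPosMatrix (n : ℕ) (μ : ℕ → ℕ) {R : Type*} (X : (Σ _ : ℕ, ℕ) → (Σ _ : ℕ, ℕ) → R) :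
    Matrix (BlockPos n μ) (BlockPos n μ) R :=
  of fun p q => X p q

theorem blockPosMatrix_mul {R : Type*} [NonUnitalNonAssocSemiring R]
    (X Y : (Σ _ : ℕ, ℕ) → (Σ _ : ℕ, ℕ) → R) :
    blockPosMatrix n μ X * blockPosMatrix n μ Y = blockPosMatrix n μ fun x y =>
      ∑ a ∈ range n, ∑ i ∈ range (μ a), X x ⟨a, i⟩ * Y ⟨a, i⟩ y := by
  ext p q
  simp only [blockPosMatrix, mul_apply, of_apply]
  rw [sum_coe_sort _ fun x => X p x * Y x q, sum_sigma]

theorem one_eq_blockPosMatrix {R : Type*} [Zero R] [One R] :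
    (1 : Matrix (BlockPos n μ) (BlockPos n μ) R) =
      blockPosMatrix n μ fun x y => if x = y then 1 else 0 := by
  ext p q
  simp only [blockPosMatrix, one_apply, of_apply, Subtype.ext_iff]

variable [Ring A]

theorem coeff_mul_eq_sum_range (φ ψ : A⟦X⟧) (r : ℕ) :
    coeff r (φ * ψ) = ∑ e ∈ range (r + 1), coeff e φ * coeff (r - e) ψ := by
  rw [coeff_mul, Nat.sum_antidiagonal_eq_sum_range_succ_mk]

variable (n μ) in
/-- `T(u)` as a matrix over `A⟦X⟧`, with `X` standing for `u⁻¹`. -/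
def seriesMatrix (T : ℕ → ℕ → ℕ → A) : Matrix (BlockPos n μ) (BlockPos n μ) A⟦X⟧ :=
  blockPosMatrix n μ fun x y => mk (T (off μ x.1 + x.2) (off μ y.1 + y.2))

variable (n μ) in
def blockMatrix (B : ℕ → ℕ → ℕ → ℕ → ℕ → A) : Matrix (BlockPos n μ) (BlockPos n μ) A⟦X⟧ :=
  blockPosMatrix n μ fun x y => mk (B x.1 y.1 x.2 y.2)

variable (n μ) in
def blockDiagMatrix (B : ℕ → ℕ → ℕ → ℕ → A) : Matrix (BlockPos n μ) (BlockPos n μ) A⟦X⟧ :=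
  blockPosMatrix n μ fun x y => if x.1 = y.1 then mk (B x.1 x.2 y.2) else 0

theorem seriesMatrix_mul_eq_one {T T' : ℕ → ℕ → ℕ → A}
    (h : ∀ i j r, i < off μ n → j < off μ n →
      ∑ g ∈ range (off μ n), ∑ e ∈ range (r + 1), T i g e * T' g j (r - e) =
        if i = j ∧ r = 0 then 1 else 0) :
    seriesMatrix n μ T * seriesMatrix n μ T' = 1 := by
  rw [seriesMatrix, seriesMatrix, blockPosMatrix_mul, one_eq_blockPosMatrix]
  ext p q r
  have hpq := h _ _ r (off_add_lt_off p.fst_lt p.snd_lt)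
    (off_add_lt_off q.fst_lt q.snd_lt)
  rw [sum_range_off] at hpq
  simp only [blockPosMatrix, of_apply, map_sum, coeff_mul_eq_sum_range, coeff_mk, hpq,
    BlockPos.val_eq_iff]
  split_ifs <;> simp_all

theorem blockDiagMatrix_mul_eq_one {B B' : ℕ → ℕ → ℕ → ℕ → A}
    (h : ∀ a i j r, a < n → i < μ a → j < μ a →
      ∑ q ∈ range (μ a), ∑ e ∈ range (r + 1), B a i q e * B' a q j (r - e) =
        if i = j ∧ r = 0 then 1 else 0) :
    blockDiagMatrix n μ B * blockDiagMatrix n μ B' = 1 := by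
  rw [blockDiagMatrix, blockDiagMatrix, blockPosMatrix_mul, one_eq_blockPosMatrix]
  ext p q r
  simp only [blockPosMatrix, of_apply, ite_mul, zero_mul, mul_ite, mul_zero, sum_ite_irrel,
    sum_const_zero, map_sum]
  rw [sum_eq_single_of_mem p.1.1 (mem_range.2 p.fst_lt) fun a _ ha => by simp [Ne.symm ha]]
  by_cases hpq : p.1.1 = q.1.1
  · have hq : q.1.2 < μ p.1.1 := hpq ▸ q.snd_lt
    simp only [← hpq, if_true, map_sum, coeff_mul_eq_sum_range, coeff_mk]
    rw [h _ _ _ r p.fst_lt p.snd_lt hq]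
    split_ifs <;> simp_all [BlockPos.eq_iff]
  · simp [hpq, BlockPos.eq_iff]

theorem Gauss.seriesMatrix_eq [Algebra ℂ A] {T : ℕ → ℕ → ℕ → A} (G : Gauss T n μ) :
    seriesMatrix n μ T = blockMatrix n μ G.F * (blockDiagMatrix n μ G.D * blockMatrix n μ G.E) := by
  rw [seriesMatrix, blockMatrix, blockDiagMatrix, blockMatrix, blockPosMatrix_mul,
    blockPosMatrix_mul]
  ext p q r
  simp only [blockPosMatrix, of_apply, coeff_mk, ite_mul, zero_mul, sum_ite_irrel,
    sum_const_zero, sum_ite_eq, mem_range]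
  rw [G.decomp _ _ _ _ r p.fst_lt q.fst_lt p.snd_lt q.snd_lt, map_sum]
  refine sum_congr rfl fun a ha => ?_
  simp only [if_pos (mem_range.1 ha), map_sum, coeff_mul_eq_sum_range, coeff_mk, mul_sum]
  refine sum_congr rfl fun i _ => sum_congr rfl fun i' _ => sum_congr rfl fun e₁ he₁ => ?_
  rw [show r + 1 - e₁ = r - e₁ + 1 by have := mem_range.1 he₁; omega]
  simp only [mul_assoc]

theorem blockMatrix_blockUnitriangular {α : Type*} [LinearOrder α] {β : ℕ → α}
    (hβ : Function.Injective β) {B : ℕ → ℕ → ℕ → ℕ → ℕ → A}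
    (hdiag : ∀ a i j r, B a a i j r = if i = j ∧ r = 0 then 1 else 0)
    (hzero : ∀ a b i j r, β b < β a → B a b i j r = 0) :
    (blockMatrix n μ B).BlockUnitriangular fun p => β p.1.1 := by
  intro p q hqp
  ext r
  rcases hqp.lt_or_eq with hlt | heq
  · have hpq : p ≠ q := by rintro rfl; exact hlt.false
    simp [blockMatrix, blockPosMatrix, hzero _ _ _ _ _ hlt, one_apply_ne hpq]
  · obtain hqp := hβ heq
    simp only [blockMatrix, blockPosMatrix, Matrix.sub_apply, of_apply, map_sub, coeff_mk, hqp,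
      hdiag, one_apply, BlockPos.eq_iff, true_and]
    split_ifs <;> simp_all

theorem blockDiagMatrix_isBlockDiagonal (B : ℕ → ℕ → ℕ → ℕ → A) :
    (blockDiagMatrix n μ B).IsBlockDiagonal fun p => p.1.1 :=
  fun p q h => by simp [blockDiagMatrix, blockPosMatrix, h]

section Gauss

variable [Algebra ℂ A] {T : ℕ → ℕ → ℕ → A} (G : Gauss T n μ)

theorem Gauss.blockUnitriangular_E : (blockMatrix n μ G.E).BlockUnitriangular fun p => p.1.1 :=
  blockMatrix_blockUnitriangular Function.injective_id G.E_diag G.E_low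

theorem Gauss.blockUnitriangular_F :
    (blockMatrix n μ G.F).BlockUnitriangular (toDual ∘ fun p => p.1.1) :=
  blockMatrix_blockUnitriangular toDual.injective G.F_diag
    fun a b i j r h => G.F_high a b i j r (toDual_lt_toDual.1 h)

theorem Gauss.isUnit_blockDiagMatrix_D : IsUnit (blockDiagMatrix n μ G.D) :=
  ⟨⟨_, _, blockDiagMatrix_mul_eq_one G.D_inv, blockDiagMatrix_mul_eq_one G.D_inv'⟩, rfl⟩

end Gauss

variable (n μ) in
def BlockPos.reverse : BlockPos n (fun b => μ (n - 1 - b)) ≃ BlockPos n μ where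
  toFun p := ⟨⟨n - 1 - p.1.1, μ (n - 1 - p.1.1) - 1 - p.1.2⟩, by
    have := p.fst_lt; have := p.snd_lt; simp only [mem_sigma, mem_range]; omega⟩
  invFun p := ⟨⟨n - 1 - p.1.1, μ p.1.1 - 1 - p.1.2⟩, by
    have := p.fst_lt; have := p.snd_lt
    simp only [mem_sigma, mem_range, show n - 1 - (n - 1 - p.1.1) = p.1.1 by omega]
    omega⟩
  left_inv p := by
    have := p.fst_lt; have := p.snd_lt
    simp only [BlockPos.eq_iff]; omega
  right_inv p := by
    have := p.fst_lt; have := p.snd_lt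
    simp only [BlockPos.eq_iff, show n - 1 - (n - 1 - p.1.1) = p.1.1 by omega, true_and]
    omega

theorem BlockPos.reverse_fst (p : BlockPos n fun b => μ (n - 1 - b)) :
    (BlockPos.reverse n μ p).1.1 = n - 1 - p.1.1 := rfl

theorem seriesMatrix_reverse (T : ℕ → ℕ → ℕ → A) :
    seriesMatrix n (fun b => μ (n - 1 - b)) (fun i j r => T (off μ n - 1 - i) (off μ n - 1 - j) r) =
      (seriesMatrix n μ T).submatrix (BlockPos.reverse n μ) (BlockPos.reverse n μ) := by
  ext p q r
  simp only [seriesMatrix, blockPosMatrix, submatrix_apply, of_apply, coeff_mk]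
  rw [off_sub_off_reverse p.fst_lt p.snd_lt, off_sub_off_reverse q.fst_lt q.snd_lt]
  rfl

theorem Gauss.reverse_eq [Algebra ℂ A] {T T' : ℕ → ℕ → ℕ → A} (G : Gauss T n μ)
    (G' : Gauss (fun i j r => T' (off μ n - 1 - i) (off μ n - 1 - j) r) n
      (fun b => μ (n - 1 - b)))
    (hinv : ∀ i j r, i < off μ n → j < off μ n →
      ∑ g ∈ range (off μ n), ∑ e ∈ range (r + 1), T' i g e * T g j (r - e) =
        if i = j ∧ r = 0 then 1 else 0)
    {E' F' : Matrix (BlockPos n μ) (BlockPos n μ) A⟦X⟧}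
    (hEE' : blockMatrix n μ G.E * E' = 1) (hE' : E'.BlockUnitriangular fun p => p.1.1)
    (hFF' : blockMatrix n μ G.F * F' = 1) (hF' : F'.BlockUnitriangular (toDual ∘ fun p => p.1.1)) :
    blockMatrix n _ G'.F = E'.submatrix (BlockPos.reverse n μ) (BlockPos.reverse n μ) ∧
    blockDiagMatrix n _ G'.D =
      (blockDiagMatrix n μ G.D').submatrix (BlockPos.reverse n μ) (BlockPos.reverse n μ) ∧
    blockMatrix n _ G'.E = F'.submatrix (BlockPos.reverse n μ) (BlockPos.reverse n μ) := by
  set e := BlockPos.reverse n μ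
  have hT' : seriesMatrix n μ T' = E' * blockDiagMatrix n μ G.D' * F' := by
    refine left_inv_eq_right_inv (seriesMatrix_mul_eq_one hinv) ?_
    rw [G.seriesMatrix_eq]
    calc _ = blockMatrix n μ G.F * (blockDiagMatrix n μ G.D * (blockMatrix n μ G.E * E') *
          blockDiagMatrix n μ G.D') * F' := by simp only [mul_assoc]
      _ = 1 := by rw [hEE', mul_one, blockDiagMatrix_mul_eq_one G.D_inv, mul_one, hFF']
  have hτ := G'.seriesMatrix_eq
  rw [seriesMatrix_reverse, hT', ← submatrix_mul_equiv _ _ _ e, ← submatrix_mul_equiv _ _ _ e,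
    ← mul_assoc] at hτ
  exact ldu_unique G'.blockUnitriangular_F
    (hE'.submatrix e fun p q h => by
      simp only [Function.comp_apply, toDual_le_toDual, e, BlockPos.reverse_fst] at h ⊢; omega)
    (blockDiagMatrix_isBlockDiagonal _)
    ((blockDiagMatrix_isBlockDiagonal _).submatrix e fun p q h => by
      have := p.fst_lt; have := q.fst_lt
      simp only [e, BlockPos.reverse_fst] at h ⊢; omega)
    G'.blockUnitriangular_E
    (hF'.submatrix e fun p q h => by
      simp only [Function.comp_apply, toDual_le_toDual, e, BlockPos.reverse_fst] at h ⊢; omega)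
    G'.isUnit_blockDiagMatrix_D hτ.symm

theorem Gauss.reverse_blocks [Algebra ℂ A] {T T' : ℕ → ℕ → ℕ → A} (G : Gauss T n μ)
    (G' : Gauss (fun i j r => T' (off μ n - 1 - i) (off μ n - 1 - j) r) n
      (fun b => μ (n - 1 - b)))
    (hinv : ∀ i j r, i < off μ n → j < off μ n →
      ∑ g ∈ range (off μ n), ∑ e ∈ range (r + 1), T' i g e * T g j (r - e) =
        if i = j ∧ r = 0 then 1 else 0) :
    (blockDiagMatrix n _ G'.D').submatrix (BlockPos.reverse n μ).symm
        (BlockPos.reverse n μ).symm = blockDiagMatrix n μ G.D ∧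
    (∀ p q : BlockPos n μ, p.1.1 ⋖ q.1.1 →
      blockMatrix n _ G'.F ((BlockPos.reverse n μ).symm p) ((BlockPos.reverse n μ).symm q) =
        -blockMatrix n μ G.E p q) ∧
    (∀ p q : BlockPos n μ, q.1.1 ⋖ p.1.1 →
      blockMatrix n _ G'.E ((BlockPos.reverse n μ).symm p) ((BlockPos.reverse n μ).symm q) =
        -blockMatrix n μ G.F p q) := by
  set e := BlockPos.reverse n μ
  obtain ⟨E', hEE', -, hE'⟩ := G.blockUnitriangular_E.exists_inverse
  obtain ⟨F', hFF', -, hF'⟩ := G.blockUnitriangular_F.exists_inverse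
  obtain ⟨hF, hD, hE⟩ := G.reverse_eq G' hinv hEE' hE' hFF' hF'
  refine ⟨?_, fun p q hpq => ?_, fun p q hpq => ?_⟩
  · have h : (blockDiagMatrix n μ G.D).submatrix e e * blockDiagMatrix n _ G'.D = 1 := by
      rw [hD, submatrix_mul_equiv, blockDiagMatrix_mul_eq_one G.D_inv, submatrix_one_equiv]
    rw [← left_inv_eq_right_inv h (blockDiagMatrix_mul_eq_one G'.D_inv), submatrix_submatrix]
    simp
  · rw [hF, submatrix_apply, e.apply_symm_apply, e.apply_symm_apply]
    exact G.blockUnitriangular_E.inverse_apply_of_covBy hE' hEE' hpq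
  · rw [hE, submatrix_apply, e.apply_symm_apply, e.apply_symm_apply]
    exact G.blockUnitriangular_F.inverse_apply_of_covBy hF' hFF' (toDual_covBy_toDual_iff.2 hpq)

end

/-- `ζ` identifies the generating matrix of `Y_{←μ}(s†)` with `τ_{ij}(u) = t'_{rev i, rev j}(u)`,
so its Gauss blocks `G2` are taken inside the same algebra. -/
theorem statement14_general [Ring A] [Algebra ℂ A] {d n : ℕ} {p : ℕ → ZMod 2} {μ : ℕ → ℕ}
    (S : RTT A d p) (t' : ℕ → ℕ → ℕ → A)
    (hinv' : ∀ i j r : ℕ, i < d → j < d →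
      ∑ g ∈ Finset.range d, ∑ e ∈ Finset.range (r + 1), t' i g e * S.t g j (r - e) =
        if i = j ∧ r = 0 then 1 else 0)
    (G : Gauss S.t n μ)
    (G2 : Gauss (fun i j r => t' (d - 1 - i) (d - 1 - j) r) n (fun b => μ (n - 1 - b)))
    (hd : off μ n = d) :
    (∀ a i j r : ℕ, a < n → i < μ a → j < μ a →
      G.D a i j r = G2.D' (n - 1 - a) (μ a - 1 - i) (μ a - 1 - j) r) ∧
    (∀ a h k r : ℕ, a + 1 < n → h < μ a → k < μ (a + 1) →
      G.E a (a + 1) h k r =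
        - G2.F (n - 1 - a) (n - 2 - a) (μ a - 1 - h) (μ (a + 1) - 1 - k) r) ∧
    (∀ a h k r : ℕ, a + 1 < n → h < μ a → k < μ (a + 1) →
      G.F (a + 1) a k h r =
        - G2.E (n - 2 - a) (n - 1 - a) (μ (a + 1) - 1 - k) (μ a - 1 - h) r) := by
  subst hd
  obtain ⟨hD, hE, hF⟩ := G.reverse_blocks G2 hinv'
  have mem : ∀ {a i}, a < n → i < μ a → (⟨a, i⟩ : Σ _ : ℕ, ℕ) ∈ (range n).sigma (range ∘ μ) :=
    fun ha hi => by simp [ha, hi]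
  refine ⟨fun a i j r ha hi hj => ?_, fun a h k r ha hh hk => ?_, fun a h k r ha hh hk => ?_⟩
  · simpa [blockDiagMatrix, blockPosMatrix, BlockPos.reverse] using
      (congrArg (coeff r) (congrFun (congrFun hD ⟨_, mem ha hi⟩) ⟨_, mem ha hj⟩)).symm
  · rw [show n - 2 - a = n - 1 - (a + 1) by omega]
    refine neg_eq_iff_eq_neg.1 ?_
    simpa [blockMatrix, blockPosMatrix, BlockPos.reverse] using (congrArg (coeff r)
      (hE ⟨_, mem (by omega) hh⟩ ⟨_, mem ha hk⟩ (Order.covBy_add_one a))).symm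
  · rw [show n - 2 - a = n - 1 - (a + 1) by omega]
    refine neg_eq_iff_eq_neg.1 ?_
    simpa [blockMatrix, blockPosMatrix, BlockPos.reverse] using (congrArg (coeff r)
      (hF ⟨_, mem ha hk⟩ ⟨_, mem (by omega) hh⟩ (Order.covBy_add_one a))).symm

/-- Under the isomorphism `ζ_{M|N} : Y_μ(s) → Y_{←μ}(s†)`, given by
`ζ(t_{ij}(u)) = t'_{rev i, rev j}(u)`, the Gauss blocks transform as
`ζ(D_{a;i,j}(u)) = D'_{n+1-a; μ_a+1-i, μ_a+1-j}(u)`,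
`ζ(E_{a;h,k}(u)) = -F_{n-a; μ_a+1-h, μ_{a+1}+1-k}(u)`,
`ζ(F_{a;k,h}(u)) = -E_{n-a; μ_{a+1}+1-k, μ_a+1-h}(u)` (1-based, 0-based below), where the
right-hand blocks are the Gauss blocks, with respect to the reversed composition `←μ`,
of the matrix `τ` with `τ_{ij}(u) = t'_{rev i, rev j}(u)` (which realizes `ζ` inside one
algebra, since `ζ` identifies the generating matrix of `Y_{←μ}(s†)` with `τ`). -/
theorem statement14 [Ring A] [Algebra ℂ A] {d n : ℕ} {p : ℕ → ZMod 2} {μ : ℕ → ℕ}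
    (S : RTT A d p) (t' : ℕ → ℕ → ℕ → A)
    (hinv : ∀ i j r : ℕ, i < d → j < d →
      ∑ g ∈ Finset.range d, ∑ e ∈ Finset.range (r + 1), S.t i g e * t' g j (r - e) =
        if i = j ∧ r = 0 then 1 else 0)
    (hinv' : ∀ i j r : ℕ, i < d → j < d →
      ∑ g ∈ Finset.range d, ∑ e ∈ Finset.range (r + 1), t' i g e * S.t g j (r - e) =
        if i = j ∧ r = 0 then 1 else 0)
    (G : Gauss S.t n μ)
    (G2 : Gauss (fun i j r => t' (d - 1 - i) (d - 1 - j) r) n (fun b => μ (n - 1 - b)))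
    (hd : off μ n = d) :
    (∀ a i j r : ℕ, a < n → i < μ a → j < μ a →
      G.D a i j r = G2.D' (n - 1 - a) (μ a - 1 - i) (μ a - 1 - j) r) ∧
    (∀ a h k r : ℕ, a + 1 < n → h < μ a → k < μ (a + 1) →
      G.E a (a + 1) h k r =
        - G2.F (n - 1 - a) (n - 2 - a) (μ a - 1 - h) (μ (a + 1) - 1 - k) r) ∧
    (∀ a h k r : ℕ, a + 1 < n → h < μ a → k < μ (a + 1) →
      G.F (a + 1) a k h r =
        - G2.E (n - 2 - a) (n - 1 - a) (μ (a + 1) - 1 - k) (μ a - 1 - h) r) :=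
  statement14_general S t' hinv' G G2 hd

end SuperYangian
end
end
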